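/- arXiv:0809.4633 — 6 statements merged into one kernel-verified Lean document; each statement's English description precedes it below -/
import Mathlib

section
/- (Lemma 1: Strichartz norm controlled by the near-degeneracy factor.) There exists a constant C, depending only on d, such that for every integer N ≥ 1 and every finitely supported c : ℤ^d → ℂ with c_n = 0 whenever |n_j| > N for some j, one has ∫₀¹ ∫_{[0,1]^d} |u(t,x)|⁴ dx dt ≤ C · (sup_{ℓ∈ℝ} #A_ℓ) · (Σ_{n∈ℤ^d} |c_n|²)². -/
/-!
Cut the frequency cube `[-N, N]^d` into its `2^d` sign octants: by the power-mean inequality this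
costs a factor `(2^d)^3`, and inside one octant any two frequencies differ by at most `N` in each
coordinate. For one octant, Parseval's identity applied to `u²` gives
`∫ |u(t)|⁴ dx = Σ_h |B_h(t)|²` with `B_h(t) = Σ_{p₁+p₂=h} c_{p₁} c_{p₂} e^{-it(Q(p₁)+Q(p₂))}`.
Each `∫₀¹ |B_h|² dt` is bounded by a large-sieve inequality: `1_{[0,1]}` is at most twice the
self-convolution of `1_{[-1/4,3/4]}`, and the Fourier transform of that convolution is
`O(min(1, ξ⁻²))`, so Schur's test gives
`∫₀¹ |Σ w_i e^{-itξ_i}|² dt ≲ (max_k #{i | ⌊ξ_i⌋ = k}) Σ |w_i|²`. Finally, for fixed `h` the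
pairs with `Q(p₁) + Q(p₂)` in a unit band inject into some `A_ℓ` via `m = p₁ - p₂`, because
`Q(p₁ - p₂) = 2 (Q(p₁) + Q(p₂)) - Q(h)`.
-/

open MeasureTheory Complex Finset

noncomputable section

namespace Strichartz

variable {ι : Type*} [Fintype ι]

def torusChar (n : ι → ℤ) (x : ι → ℝ) : ℂ :=
  exp (2 * Real.pi * I * ∑ j, (n j : ℂ) * (x j : ℂ))

lemma torusChar_add (n m : ι → ℤ) (x : ι → ℝ) :
    torusChar (n + m) x = torusChar n x * torusChar m x := by
  simp only [torusChar, ← exp_add, Pi.add_apply, Int.cast_add, add_mul, sum_add_distrib]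
  ring_nf

lemma conj_torusChar (n : ι → ℤ) (x : ι → ℝ) :
    (starRingEnd ℂ) (torusChar n x) = torusChar (-n) x := by
  simp only [torusChar, ← exp_conj, map_mul, map_sum, conj_ofReal, conj_I, map_intCast,
    map_ofNat, Pi.neg_apply, Int.cast_neg, neg_mul, sum_neg_distrib]
  ring_nf

@[fun_prop]
lemma continuous_torusChar (n : ι → ℤ) : Continuous (torusChar n) := by
  unfold torusChar; fun_prop

lemma integral_Icc_exp_two_pi_I_int_mul (k : ℤ) :
    ∫ s in Set.Icc (0 : ℝ) 1, exp (2 * Real.pi * I * ((k : ℂ) * (s : ℂ))) =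
      if k = 0 then 1 else 0 := by
  rw [integral_Icc_eq_integral_Ioc, ← intervalIntegral.integral_of_le zero_le_one]
  split_ifs with hk
  · simp [hk]
  have hc : 2 * Real.pi * I * k ≠ 0 := by simp [hk, Real.pi_ne_zero]
  simp_rw [← mul_assoc]
  rw [integral_exp_mul_complex hc]
  simp [mul_comm _ (k : ℂ), exp_int_mul_two_pi_mul_I]

lemma integral_torusChar (n : ι → ℤ) :
    ∫ x in Set.Icc (0 : ι → ℝ) 1, torusChar n x = if n = 0 then 1 else 0 := by
  have hprod : ∀ x, torusChar n x = ∏ j, exp (2 * Real.pi * I * ((n j : ℂ) * (x j : ℂ))) := by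
    intro x; rw [torusChar, mul_sum, exp_sum]
  simp_rw [hprod]
  rw [← Set.pi_univ_Icc, volume_pi, Measure.restrict_pi_pi, integral_fintype_prod_eq_prod
    (f := fun j (s : ℝ) => exp (2 * Real.pi * I * ((n j : ℂ) * (s : ℂ))))]
  simp_rw [Pi.zero_apply, Pi.one_apply, integral_Icc_exp_two_pi_I_int_mul, prod_ite_zero]
  simp [funext_iff]

lemma integral_norm_sq_sum_torusChar (S : Finset (ι → ℤ)) (b : (ι → ℤ) → ℂ) :
    ∫ x in Set.Icc (0 : ι → ℝ) 1, ‖∑ n ∈ S, b n * torusChar n x‖ ^ 2 = ∑ n ∈ S, ‖b n‖ ^ 2 := by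
  apply ofReal_injective
  have hexpand : ∀ x, ((‖∑ n ∈ S, b n * torusChar n x‖ ^ 2 : ℝ) : ℂ) =
      ∑ n ∈ S, ∑ m ∈ S, b n * (starRingEnd ℂ) (b m) * torusChar (n - m) x := by
    intro x
    push_cast
    rw [← mul_conj', map_sum, sum_mul_sum]
    refine sum_congr rfl fun n _ => sum_congr rfl fun m _ => ?_
    rw [map_mul, conj_torusChar, sub_eq_add_neg, torusChar_add]
    ring
  have hint : ∀ n m, IntegrableOn (fun x => b n * (starRingEnd ℂ) (b m) * torusChar (n - m) x)
      (Set.Icc 0 1) := fun n m => Continuous.integrableOn_Icc (by fun_prop)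
  rw [← integral_complex_ofReal]
  simp_rw [hexpand]
  rw [integral_finsetSum _ fun n _ => integrable_finsetSum _ fun m _ => hint n m]
  simp_rw [integral_finsetSum _ fun m _ => hint _ m, integral_const_mul, integral_torusChar,
    sub_eq_zero, mul_ite, mul_one, mul_zero, sum_ite_eq, mul_conj']
  push_cast
  exact sum_congr rfl fun n hn => if_pos hn

lemma sum_mul_torusChar_sq (D : Finset (ι → ℤ)) (b : (ι → ℤ) → ℂ) (x : ι → ℝ) :
    (∑ n ∈ D, b n * torusChar n x) ^ 2 =
      ∑ h ∈ (D ×ˢ D).image (fun p => p.1 + p.2),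
        (∑ p ∈ D ×ˢ D with p.1 + p.2 = h, b p.1 * b p.2) * torusChar h x := by
  rw [sq, sum_mul_sum, ← sum_product',
    ← sum_fiberwise_of_maps_to fun p hp => mem_image_of_mem (fun p => p.1 + p.2) hp]
  refine sum_congr rfl fun h _ => ?_
  rw [sum_mul]
  refine sum_congr rfl fun p hp => ?_
  rw [← (mem_filter.mp hp).2, torusChar_add]
  ring

lemma integral_norm_pow_four_sum_torusChar (D : Finset (ι → ℤ)) (b : (ι → ℤ) → ℂ) :
    ∫ x in Set.Icc (0 : ι → ℝ) 1, ‖∑ n ∈ D, b n * torusChar n x‖ ^ 4 =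
      ∑ h ∈ (D ×ˢ D).image (fun p => p.1 + p.2),
        ‖∑ p ∈ D ×ˢ D with p.1 + p.2 = h, b p.1 * b p.2‖ ^ 2 := by
  simp_rw [show ∀ z : ℂ, ‖z‖ ^ 4 = ‖z ^ 2‖ ^ 2 by intro z; rw [norm_pow]; ring,
    sum_mul_torusChar_sq, integral_norm_sq_sum_torusChar]

lemma integral_le_two_mul_integral_integral_shift {g : ℝ → ℝ} (hg : Continuous g)
    (hg0 : ∀ t, 0 ≤ g t) :
    ∫ t in (0 : ℝ)..1, g t ≤ 2 * ∫ s in (0 : ℝ)..1, ∫ t in (0 : ℝ)..1, g (s + t - 1 / 2) := by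
  set W : ℝ → ℝ := fun s => ∫ t in (0 : ℝ)..1, g (s + t - 1 / 2)
  have hW : Continuous W :=
    intervalIntegral.continuous_parametric_intervalIntegral_of_continuous' (by fun_prop) 0 1
  have hwindow : ∀ s, W s = ∫ t in (s - 1 / 2)..(s + 1 / 2), g t := by
    intro s
    simp only [W, show ∀ t, s + t - 1 / 2 = (s - 1 / 2) + t by intro t; ring,
      intervalIntegral.integral_comp_add_left g (s - 1 / 2)]
    ring_nf
  -- for `s` in either half of `[0, 1]`, the window `[s - 1/2, s + 1/2]` contains that half
  have hhalf : ∀ a s, s ∈ Set.Icc a (a + 1 / 2) →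
      ∫ t in a..(a + 1 / 2), g t ≤ W s := fun a s hs => by
    rw [hwindow]
    exact intervalIntegral.integral_mono_interval (by linarith [hs.2]) (by linarith)
      (by linarith [hs.1]) (Filter.Eventually.of_forall hg0) (hg.intervalIntegrable _ _)
  have hlower : ∀ a, (∫ t in a..(a + 1 / 2), g t) / 2 ≤ ∫ s in a..(a + 1 / 2), W s := by
    intro a
    have := intervalIntegral.integral_mono_on (by linarith) (intervalIntegrable_const (μ := volume))
      (hW.intervalIntegrable _ _) (hhalf a)
    rw [intervalIntegral.integral_const, smul_eq_mul] at this
    linarith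
  have hsplit : ∀ f : ℝ → ℝ, Continuous f →
      ∫ t in (0 : ℝ)..1, f t = (∫ t in (0 : ℝ)..(1 / 2), f t) + ∫ t in (1 / 2 : ℝ)..1, f t :=
    fun f hf => (intervalIntegral.integral_add_adjacent_intervals (hf.intervalIntegrable _ _)
      (hf.intervalIntegrable _ _)).symm
  have h₀ := hlower 0
  have h₁ := hlower (1 / 2)
  norm_num at h₀ h₁
  linarith [hsplit g hg, hsplit W hW]

def decayWeight (n : ℕ) : ℝ := (max 1 (n : ℝ))⁻¹ ^ 2

lemma decayWeight_nonneg (n : ℕ) : 0 ≤ decayWeight n := by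
  unfold decayWeight; positivity

lemma sum_decayWeight_le (T : Finset ℕ) : ∑ n ∈ T, decayWeight n ≤ 3 := by
  have hT : T ⊆ insert 0 (Ioo 0 (T.sup id + 1)) := fun n hn => by
    have := le_sup (f := id) hn
    rcases n.eq_zero_or_pos with rfl | h
    · exact mem_insert_self _ _
    · exact mem_insert_of_mem (mem_Ioo.mpr ⟨h, by simp only [id] at this; omega⟩)
  have hpos : ∀ n ∈ Ioo 0 (T.sup id + 1), decayWeight n = ((n : ℝ) ^ 2)⁻¹ := fun n hn => by
    rw [decayWeight, max_eq_right (by exact_mod_cast (mem_Ioo.mp hn).1), inv_pow]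
  calc ∑ n ∈ T, decayWeight n ≤ ∑ n ∈ insert 0 (Ioo 0 (T.sup id + 1)), decayWeight n :=
        sum_le_sum_of_subset_of_nonneg hT fun n _ _ => decayWeight_nonneg n
    _ = 1 + ∑ n ∈ Ioo 0 (T.sup id + 1), ((n : ℝ) ^ 2)⁻¹ := by
        rw [sum_insert (by simp), sum_congr rfl hpos]; simp [decayWeight]
    _ ≤ 1 + 2 := by
        gcongr
        simpa using sum_Ioo_inv_sq_le (α := ℝ) 0 (T.sup id + 1)
    _ = 3 := by norm_num

lemma max_one_natAbs_floor_sub_le (a b : ℝ) :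
    max 1 ((⌊a⌋ - ⌊b⌋).natAbs : ℝ) ≤ 2 * max 1 |a - b| := by
  have h : ((⌊a⌋ - ⌊b⌋).natAbs : ℝ) ≤ |a - b| + 1 := by
    rw [Nat.cast_natAbs, Int.cast_abs, Int.cast_sub, abs_le]
    constructor <;> linarith [abs_le.mp (le_refl |a - b|), Int.floor_le a, Int.floor_le b,
      Int.lt_floor_add_one a, Int.lt_floor_add_one b]
  have := le_max_left 1 |a - b|
  have := le_max_right 1 |a - b|
  exact max_le (by linarith) (by linarith)

lemma norm_integral_exp_neg_I_mul_le (ξ : ℝ) :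
    ‖∫ t in (0 : ℝ)..1, exp (-I * t * ξ)‖ ≤ 2 / max 1 |ξ| := by
  rcases le_or_gt |ξ| 1 with hξ | hξ
  · rw [max_eq_left hξ]
    calc ‖∫ t in (0 : ℝ)..1, exp (-I * t * ξ)‖ ≤ 1 * |(1 : ℝ) - 0| :=
          intervalIntegral.norm_integral_le_of_norm_le_const fun t _ => by
            rw [norm_exp]; simp
      _ ≤ 2 / 1 := by norm_num
  · have hξ0 : ξ ≠ 0 := by rintro rfl; simp at hξ; linarith
    have hc : -I * ξ ≠ 0 := by simp [hξ0]
    have hnorm : ‖-I * (ξ : ℂ)‖ = |ξ| := by simp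
    simp_rw [mul_right_comm (-I), integral_exp_mul_complex hc, max_eq_right hξ.le]
    rw [norm_div, hnorm]
    gcongr
    calc _ ≤ ‖exp (-I * ξ * (1 : ℝ))‖ + ‖exp (-I * ξ * (0 : ℝ))‖ := norm_sub_le _ _
      _ = 2 := by rw [norm_exp, norm_exp]; norm_num

lemma norm_sq_integral_exp_le_decayWeight (a b : ℝ) :
    ‖∫ t in (0 : ℝ)..1, exp (-I * t * (a - b : ℝ))‖ ^ 2 ≤
      16 * decayWeight (⌊a⌋ - ⌊b⌋).natAbs := by
  have hfloor := max_one_natAbs_floor_sub_le a b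
  have hpos : (0 : ℝ) < max 1 ((⌊a⌋ - ⌊b⌋).natAbs : ℝ) := lt_max_of_lt_left one_pos
  have hle : ‖∫ t in (0 : ℝ)..1, exp (-I * t * (a - b : ℝ))‖ ≤
      4 / max 1 ((⌊a⌋ - ⌊b⌋).natAbs : ℝ) := by
    refine (norm_integral_exp_neg_I_mul_le _).trans ?_
    rw [div_le_div_iff₀ (lt_max_of_lt_left one_pos) hpos]
    linarith
  calc _ ≤ (4 / max 1 ((⌊a⌋ - ⌊b⌋).natAbs : ℝ)) ^ 2 := by gcongr
    _ = _ := by rw [decayWeight]; ring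

lemma sum_decayWeight_natAbs_sub_le {κ : Type*} (s : Finset κ) (β : κ → ℤ) {M : ℝ}
    (hM : ∀ k, (#{j ∈ s | β j = k} : ℝ) ≤ M) (c : ℤ) :
    ∑ j ∈ s, decayWeight (c - β j).natAbs ≤ 6 * M := by
  classical
  have hfiber : ∀ n : ℕ, (#{j ∈ s | (c - β j).natAbs = n} : ℝ) ≤ 2 * M := fun n => by
    have hsub : {j ∈ s | (c - β j).natAbs = n} ⊆
        {j ∈ s | β j = c - n} ∪ {j ∈ s | β j = c + n} := fun j hj => by
      obtain ⟨hjs, hn⟩ := mem_filter.mp hj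
      rcases Int.natAbs_eq_iff.mp hn with h | h
      · exact mem_union_left _ (mem_filter.mpr ⟨hjs, by omega⟩)
      · exact mem_union_right _ (mem_filter.mpr ⟨hjs, by omega⟩)
    calc (#{j ∈ s | (c - β j).natAbs = n} : ℝ)
        ≤ #{j ∈ s | β j = c - n} + #{j ∈ s | β j = c + n} := by
          exact_mod_cast (card_le_card hsub).trans (card_union_le _ _)
      _ ≤ 2 * M := by linarith [hM (c - n), hM (c + n)]
  have hM0 : 0 ≤ M := le_trans (by positivity) (hM 0)
  rw [sum_comp decayWeight fun j => (c - β j).natAbs]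
  calc ∑ n ∈ s.image fun j => (c - β j).natAbs, #{j ∈ s | (c - β j).natAbs = n} • decayWeight n
      ≤ ∑ n ∈ s.image fun j => (c - β j).natAbs, 2 * M * decayWeight n := by
        gcongr with n
        rw [nsmul_eq_mul]
        exact mul_le_mul_of_nonneg_right (hfiber n) (decayWeight_nonneg n)
    _ ≤ 2 * M * 3 := by rw [← mul_sum]; gcongr; exact sum_decayWeight_le _
    _ = 6 * M := by ring

lemma sum_sum_mul_mul_le_of_sum_le {κ : Type*} {s : Finset κ} (w : κ → ℝ) (K : κ → κ → ℝ)
    (hK₀ : ∀ i j, 0 ≤ K i j) (hK : ∀ i j, K i j = K j i) {R : ℝ}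
    (hR : ∀ i ∈ s, ∑ j ∈ s, K i j ≤ R) :
    ∑ i ∈ s, ∑ j ∈ s, w i * w j * K i j ≤ R * ∑ i ∈ s, w i ^ 2 := by
  have hAMGM : ∀ i j, w i * w j * K i j ≤ (w i ^ 2 * K i j + w j ^ 2 * K j i) / 2 := by
    intro i j
    rw [hK j i]
    nlinarith [two_mul_le_add_sq (w i) (w j), hK₀ i j]
  calc ∑ i ∈ s, ∑ j ∈ s, w i * w j * K i j
      ≤ ∑ i ∈ s, ∑ j ∈ s, (w i ^ 2 * K i j + w j ^ 2 * K j i) / 2 := by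
        gcongr with i _ j _; exact hAMGM i j
    _ = ∑ i ∈ s, w i ^ 2 * ∑ j ∈ s, K i j := by
        simp_rw [add_div, sum_add_distrib, mul_sum]
        rw [sum_comm (f := fun i j => w j ^ 2 * K j i / 2), ← sum_add_distrib]
        simp_rw [← sum_add_distrib, add_halves]
    _ ≤ ∑ i ∈ s, w i ^ 2 * R := by gcongr with i hi; exact hR i hi
    _ = R * ∑ i ∈ s, w i ^ 2 := by rw [← sum_mul, mul_comm]

lemma integral_integral_exp_shift (ξ : ℝ) :
    ∫ u in (0 : ℝ)..1, ∫ v in (0 : ℝ)..1, exp (-I * ((u + v - 1 / 2 : ℝ) : ℂ) * ξ) =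
      exp (I * ξ / 2) * (∫ t in (0 : ℝ)..1, exp (-I * t * ξ)) ^ 2 := by
  have hfactor : ∀ u v : ℝ, exp (-I * ((u + v - 1 / 2 : ℝ) : ℂ) * ξ) =
      exp (I * ξ / 2) * exp (-I * u * ξ) * exp (-I * v * ξ) := fun u v => by
    rw [← exp_add, ← exp_add]; push_cast; ring_nf
  simp only [hfactor, intervalIntegral.integral_const_mul, intervalIntegral.integral_mul_const]
  ring

lemma ofReal_norm_sq_sum_exp {κ : Type*} (s : Finset κ) (w : κ → ℂ) (ξ : κ → ℝ) (t : ℝ) :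
    ((‖∑ i ∈ s, w i * exp (-I * t * ξ i)‖ ^ 2 : ℝ) : ℂ) =
      ∑ i ∈ s, ∑ j ∈ s, w i * (starRingEnd ℂ) (w j) * exp (-I * t * (ξ i - ξ j : ℝ)) := by
  push_cast
  rw [← mul_conj', map_sum, sum_mul_sum]
  refine sum_congr rfl fun i _ => sum_congr rfl fun j _ => ?_
  rw [map_mul, ← exp_conj, mul_mul_mul_comm, ← exp_add]
  congr 2
  simp only [map_mul, map_neg, conj_I, conj_ofReal]
  ring

lemma ofReal_integral_integral_norm_sq_sum_exp_shift {κ : Type*} (s : Finset κ) (w : κ → ℂ)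
    (ξ : κ → ℝ) :
    ((∫ u in (0 : ℝ)..1, ∫ v in (0 : ℝ)..1,
        ‖∑ i ∈ s, w i * exp (-I * ((u + v - 1 / 2 : ℝ) : ℂ) * ξ i)‖ ^ 2 : ℝ) : ℂ) =
      ∑ p ∈ s ×ˢ s, w p.1 * (starRingEnd ℂ) (w p.2) *
        (exp (I * (ξ p.1 - ξ p.2 : ℝ) / 2) *
          (∫ t in (0 : ℝ)..1, exp (-I * t * (ξ p.1 - ξ p.2 : ℝ))) ^ 2) := by
  have hinner : ∀ u : ℝ, ∫ v in (0 : ℝ)..1,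
      ((‖∑ i ∈ s, w i * exp (-I * ((u + v - 1 / 2 : ℝ) : ℂ) * ξ i)‖ ^ 2 : ℝ) : ℂ) =
      ∑ p ∈ s ×ˢ s, ∫ v in (0 : ℝ)..1, w p.1 * (starRingEnd ℂ) (w p.2) *
        exp (-I * ((u + v - 1 / 2 : ℝ) : ℂ) * (ξ p.1 - ξ p.2 : ℝ)) := fun u => by
    simp only [ofReal_norm_sq_sum_exp, ← sum_product']
    exact intervalIntegral.integral_finsetSum fun p _ =>
      (by fun_prop : Continuous _).intervalIntegrable _ _
  simp only [← intervalIntegral.integral_ofReal, hinner]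
  rw [intervalIntegral.integral_finsetSum fun p _ => Continuous.intervalIntegrable
    (intervalIntegral.continuous_parametric_intervalIntegral_of_continuous' (by fun_prop) _ _) _ _]
  simp only [intervalIntegral.integral_const_mul, integral_integral_exp_shift]

lemma integral_integral_norm_sq_sum_exp_shift_le {κ : Type*} (s : Finset κ) (w : κ → ℂ)
    (ξ : κ → ℝ) :
    ∫ u in (0 : ℝ)..1, ∫ v in (0 : ℝ)..1,
        ‖∑ i ∈ s, w i * exp (-I * ((u + v - 1 / 2 : ℝ) : ℂ) * ξ i)‖ ^ 2 ≤
      ∑ i ∈ s, ∑ j ∈ s, ‖w i‖ * ‖w j‖ *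
        ‖∫ t in (0 : ℝ)..1, exp (-I * t * (ξ i - ξ j : ℝ))‖ ^ 2 := by
  refine (Real.le_norm_self _).trans ?_
  rw [← norm_real, ofReal_integral_integral_norm_sq_sum_exp_shift, sum_product]
  refine (norm_sum_le _ _).trans (sum_le_sum fun i _ => (norm_sum_le _ _).trans_eq ?_)
  simp [norm_exp]

theorem integral_norm_sq_sum_exp_le {κ : Type*} (s : Finset κ) (w : κ → ℂ) (ξ : κ → ℝ)
    {M : ℝ} (hM : ∀ k : ℤ, (#{i ∈ s | ⌊ξ i⌋ = k} : ℝ) ≤ M) :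
    ∫ t in (0 : ℝ)..1, ‖∑ i ∈ s, w i * exp (-I * t * ξ i)‖ ^ 2 ≤
      192 * M * ∑ i ∈ s, ‖w i‖ ^ 2 := by
  have hrow : ∀ i ∈ s, ∑ j ∈ s, decayWeight (⌊ξ i⌋ - ⌊ξ j⌋).natAbs ≤ 6 * M := fun i _ =>
    sum_decayWeight_natAbs_sub_le s (fun j => ⌊ξ j⌋) hM ⌊ξ i⌋
  calc ∫ t in (0 : ℝ)..1, ‖∑ i ∈ s, w i * exp (-I * t * ξ i)‖ ^ 2
      ≤ 2 * ∫ u in (0 : ℝ)..1, ∫ v in (0 : ℝ)..1,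
          ‖∑ i ∈ s, w i * exp (-I * ((u + v - 1 / 2 : ℝ) : ℂ) * ξ i)‖ ^ 2 :=
        integral_le_two_mul_integral_integral_shift (by fun_prop) fun t => by positivity
    _ ≤ 2 * ∑ i ∈ s, ∑ j ∈ s, ‖w i‖ * ‖w j‖ * (16 * decayWeight (⌊ξ i⌋ - ⌊ξ j⌋).natAbs) := by
        grw [integral_integral_norm_sq_sum_exp_shift_le]
        gcongr with i _ j _
        exact norm_sq_integral_exp_le_decayWeight (ξ i) (ξ j)
    _ = 32 * ∑ i ∈ s, ∑ j ∈ s, ‖w i‖ * ‖w j‖ * decayWeight (⌊ξ i⌋ - ⌊ξ j⌋).natAbs := by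
        simp only [mul_sum]
        exact sum_congr rfl fun i _ => sum_congr rfl fun j _ => by ring
    _ ≤ 32 * (6 * M * ∑ i ∈ s, ‖w i‖ ^ 2) := by
        gcongr
        exact sum_sum_mul_mul_le_of_sum_le (fun i => ‖w i‖) _ (fun i j => decayWeight_nonneg _)
          (fun i j => by rw [← Int.natAbs_neg, neg_sub]) hrow
    _ = 192 * M * ∑ i ∈ s, ‖w i‖ ^ 2 := by ring

def quadForm (θ : ι → ℝ) (m : ι → ℤ) : ℝ := ∑ j, θ j * (m j : ℝ) ^ 2

def nearLevelSet (θ : ι → ℝ) (N : ℕ) (ℓ : ℝ) : Set (ι → ℤ) :=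
  {m | (∀ j, |m j| ≤ (N : ℤ)) ∧ |quadForm θ m - ℓ| ≤ 1}

def degeneracyFactor (θ : ι → ℝ) (N : ℕ) : ℝ := ⨆ ℓ : ℝ, ((nearLevelSet θ N ℓ).ncard : ℝ)

lemma finite_setOf_forall_abs_le (N : ℕ) : {m : ι → ℤ | ∀ j, |m j| ≤ (N : ℤ)}.Finite :=
  (Set.Finite.pi fun _ => Set.finite_Icc (-(N : ℤ)) N).subset fun _ hm =>
    Set.mem_univ_pi.mpr fun j => abs_le.mp (hm j)

lemma ncard_nearLevelSet_le_degeneracyFactor (θ : ι → ℝ) (N : ℕ) (ℓ : ℝ) :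
    ((nearLevelSet θ N ℓ).ncard : ℝ) ≤ degeneracyFactor θ N := by
  refine le_ciSup (f := fun ℓ => ((nearLevelSet θ N ℓ).ncard : ℝ))
    ⟨({m : ι → ℤ | ∀ j, |m j| ≤ (N : ℤ)}.ncard : ℝ), ?_⟩ ℓ
  rintro _ ⟨ℓ', rfl⟩
  exact Nat.cast_le.mpr (Set.ncard_le_ncard (fun m hm => hm.1) (finite_setOf_forall_abs_le N))

lemma degeneracyFactor_nonneg (θ : ι → ℝ) (N : ℕ) : 0 ≤ degeneracyFactor θ N :=
  (Nat.cast_nonneg _).trans (ncard_nearLevelSet_le_degeneracyFactor θ N 0)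

lemma quadForm_sub_add_quadForm_add (θ : ι → ℝ) (p q : ι → ℤ) :
    quadForm θ (p - q) + quadForm θ (p + q) = 2 * quadForm θ p + 2 * quadForm θ q := by
  simp only [quadForm, mul_sum, ← sum_add_distrib, Pi.sub_apply, Pi.add_apply]
  push_cast
  exact sum_congr rfl fun j _ => by ring

lemma card_band_le_degeneracyFactor (θ : ι → ℝ) {N : ℕ} {D : Finset (ι → ℤ)}
    (hD : ∀ p ∈ D, ∀ q ∈ D, ∀ j, |p j - q j| ≤ (N : ℤ)) (h : ι → ℤ) (k : ℤ) :
    (#{p ∈ {p ∈ D ×ˢ D | p.1 + p.2 = h} | ⌊quadForm θ p.1 + quadForm θ p.2⌋ = k} : ℝ) ≤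
      degeneracyFactor θ N := by
  refine le_trans ?_ (ncard_nearLevelSet_le_degeneracyFactor θ N (2 * k + 1 - quadForm θ h))
  rw [← Set.ncard_coe_finset]
  refine Nat.cast_le.mpr (Set.ncard_le_ncard_of_injOn (fun p => p.1 - p.2) ?_ ?_
    ((finite_setOf_forall_abs_le N).subset fun m hm => hm.1))
  · intro p hp
    simp only [coe_filter, mem_filter, mem_product] at hp
    obtain ⟨⟨⟨hp₁, hp₂⟩, hsum⟩, hband⟩ := hp
    have hQ := quadForm_sub_add_quadForm_add θ p.1 p.2
    rw [hsum] at hQ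
    have := Int.floor_le (quadForm θ p.1 + quadForm θ p.2)
    have := Int.lt_floor_add_one (quadForm θ p.1 + quadForm θ p.2)
    rw [hband] at *
    refine ⟨fun j => hD _ hp₁ _ hp₂ j, abs_le.mpr ⟨by linarith, by linarith⟩⟩
  · intro p hp q hq hpq
    simp only [coe_filter, mem_filter] at hp hq
    have h₁ : p.1 = q.1 := funext fun j => by
      have := congrFun hpq j
      have := congrFun (hp.1.2.trans hq.1.2.symm) j
      simp only [Pi.sub_apply, Pi.add_apply] at *
      omega
    have h₂ : p.2 = q.2 := funext fun j => by
      have := congrFun hpq j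
      simp only [Pi.sub_apply, h₁] at *
      omega
    exact Prod.ext h₁ h₂

def schrodingerSol (θ : ι → ℝ) (c : (ι → ℤ) → ℂ) (D : Finset (ι → ℤ)) (t : ℝ) (x : ι → ℝ) : ℂ :=
  ∑ n ∈ D, c n * torusChar n x * exp (-I * t * quadForm θ n)

lemma continuous_schrodingerSol (θ : ι → ℝ) (c : (ι → ℤ) → ℂ) (D : Finset (ι → ℤ)) :
    Continuous (Function.uncurry (schrodingerSol θ c D)) := by
  unfold schrodingerSol torusChar; fun_prop

lemma integral_norm_pow_four_schrodingerSol (θ : ι → ℝ) (c : (ι → ℤ) → ℂ)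
    (D : Finset (ι → ℤ)) (t : ℝ) :
    ∫ x in Set.Icc (0 : ι → ℝ) 1, ‖schrodingerSol θ c D t x‖ ^ 4 =
      ∑ h ∈ (D ×ˢ D).image (fun p => p.1 + p.2),
        ‖∑ p ∈ D ×ˢ D with p.1 + p.2 = h,
          c p.1 * c p.2 * exp (-I * t * (quadForm θ p.1 + quadForm θ p.2 : ℝ))‖ ^ 2 := by
  have hsol : ∀ x, schrodingerSol θ c D t x =
      ∑ n ∈ D, (c n * exp (-I * t * quadForm θ n)) * torusChar n x := fun x =>
    sum_congr rfl fun n _ => by ring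
  simp_rw [hsol, integral_norm_pow_four_sum_torusChar]
  refine sum_congr rfl fun h _ => congrArg (‖·‖ ^ 2) (sum_congr rfl fun p _ => ?_)
  push_cast
  rw [mul_add, exp_add]
  ring

theorem integral_integral_norm_pow_four_schrodingerSol_le (θ : ι → ℝ) (c : (ι → ℤ) → ℂ)
    {N : ℕ} {D : Finset (ι → ℤ)} (hD : ∀ p ∈ D, ∀ q ∈ D, ∀ j, |p j - q j| ≤ (N : ℤ)) :
    ∫ t in (0 : ℝ)..1, ∫ x in Set.Icc (0 : ι → ℝ) 1, ‖schrodingerSol θ c D t x‖ ^ 4 ≤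
      192 * degeneracyFactor θ N * (∑ n ∈ D, ‖c n‖ ^ 2) ^ 2 := by
  set E := (D ×ˢ D).image (fun p => p.1 + p.2)
  simp_rw [integral_norm_pow_four_schrodingerSol]
  rw [intervalIntegral.integral_finsetSum fun h _ =>
    (by fun_prop : Continuous _).intervalIntegrable _ _]
  calc ∑ h ∈ E, ∫ t in (0 : ℝ)..1, ‖∑ p ∈ D ×ˢ D with p.1 + p.2 = h,
          c p.1 * c p.2 * exp (-I * t * (quadForm θ p.1 + quadForm θ p.2 : ℝ))‖ ^ 2
      ≤ ∑ h ∈ E, 192 * degeneracyFactor θ N *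
          ∑ p ∈ D ×ˢ D with p.1 + p.2 = h, ‖c p.1 * c p.2‖ ^ 2 :=
        sum_le_sum fun h _ =>
          integral_norm_sq_sum_exp_le _ _ _ (card_band_le_degeneracyFactor θ hD h)
    _ = 192 * degeneracyFactor θ N * (∑ n ∈ D, ‖c n‖ ^ 2) ^ 2 := by
        rw [← mul_sum, sum_fiberwise_of_maps_to fun p hp => mem_image_of_mem _ hp, sq,
          sum_mul_sum, sum_product]
        simp_rw [norm_mul, mul_pow]

lemma norm_sum_pow_four_le {κ E : Type*} [SeminormedAddCommGroup E] (s : Finset κ) (z : κ → E) :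
    ‖∑ i ∈ s, z i‖ ^ 4 ≤ (#s : ℝ) ^ 3 * ∑ i ∈ s, ‖z i‖ ^ 4 := by
  calc ‖∑ i ∈ s, z i‖ ^ 4 ≤ ((∑ i ∈ s, ‖z i‖) ^ 2) ^ 2 := by
        rw [← pow_mul]; gcongr; exact norm_sum_le _ _
    _ ≤ (#s * ∑ i ∈ s, ‖z i‖ ^ 2) ^ 2 := by gcongr; exact sq_sum_le_card_mul_sum_sq
    _ ≤ #s ^ 2 * (#s * ∑ i ∈ s, (‖z i‖ ^ 2) ^ 2) := by
        rw [mul_pow]; gcongr; exact sq_sum_le_card_mul_sum_sq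
    _ = (#s : ℝ) ^ 3 * ∑ i ∈ s, ‖z i‖ ^ 4 := by simp_rw [← pow_mul]; ring

lemma continuous_integral_norm_pow_four_schrodingerSol (θ : ι → ℝ) (c : (ι → ℤ) → ℂ)
    (D : Finset (ι → ℤ)) :
    Continuous fun t => ∫ x in Set.Icc (0 : ι → ℝ) 1, ‖schrodingerSol θ c D t x‖ ^ 4 :=
  continuous_parametric_integral_of_continuous
    (by have := continuous_schrodingerSol θ c D; fun_prop) isCompact_Icc

lemma integral_norm_pow_four_schrodingerSol_le_sum_fiber {κ : Type*} [Fintype κ] [DecidableEq κ]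
    (θ : ι → ℝ) (c : (ι → ℤ) → ℂ) (S : Finset (ι → ℤ)) (π : (ι → ℤ) → κ) (t : ℝ) :
    ∫ x in Set.Icc (0 : ι → ℝ) 1, ‖schrodingerSol θ c S t x‖ ^ 4 ≤
      (Fintype.card κ : ℝ) ^ 3 *
        ∑ σ, ∫ x in Set.Icc (0 : ι → ℝ) 1, ‖schrodingerSol θ c {n ∈ S | π n = σ} t x‖ ^ 4 := by
  have hint : ∀ D, IntegrableOn (fun x => ‖schrodingerSol θ c D t x‖ ^ 4) (Set.Icc 0 1) :=
    fun D => Continuous.integrableOn_Icc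
      (((continuous_schrodingerSol θ c D).uncurry_left t).norm.pow 4)
  rw [← integral_finsetSum _ fun σ _ => hint _, ← integral_const_mul]
  refine setIntegral_mono_on (hint S) ((integrable_finsetSum _ fun σ _ => hint _).const_mul _)
    measurableSet_Icc fun x _ => ?_
  rw [schrodingerSol, ← sum_fiberwise S π, ← card_univ]
  exact norm_sum_pow_four_le _ _

theorem integral_integral_norm_pow_four_schrodingerSol_le_of_fiberwise {κ : Type*} [Fintype κ]
    [DecidableEq κ] (θ : ι → ℝ) (c : (ι → ℤ) → ℂ) (S : Finset (ι → ℤ)) (π : (ι → ℤ) → κ)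
    {A : ℝ} (hA₀ : 0 ≤ A)
    (hA : ∀ σ, ∫ t in (0 : ℝ)..1, ∫ x in Set.Icc (0 : ι → ℝ) 1,
        ‖schrodingerSol θ c {n ∈ S | π n = σ} t x‖ ^ 4 ≤
          A * (∑ n ∈ S with π n = σ, ‖c n‖ ^ 2) ^ 2) :
    ∫ t in (0 : ℝ)..1, ∫ x in Set.Icc (0 : ι → ℝ) 1, ‖schrodingerSol θ c S t x‖ ^ 4 ≤
      (Fintype.card κ : ℝ) ^ 3 * A * (∑ n ∈ S, ‖c n‖ ^ 2) ^ 2 := by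
  have hcont := continuous_integral_norm_pow_four_schrodingerSol θ c
  calc ∫ t in (0 : ℝ)..1, ∫ x in Set.Icc (0 : ι → ℝ) 1, ‖schrodingerSol θ c S t x‖ ^ 4
      ≤ ∫ t in (0 : ℝ)..1, (Fintype.card κ : ℝ) ^ 3 *
          ∑ σ, ∫ x in Set.Icc (0 : ι → ℝ) 1, ‖schrodingerSol θ c {n ∈ S | π n = σ} t x‖ ^ 4 :=
        intervalIntegral.integral_mono_on zero_le_one ((hcont S).intervalIntegrable _ _)
          ((continuous_const.mul (continuous_finsetSum _ fun σ _ => hcont _)).intervalIntegrable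
            _ _)
          fun t _ => integral_norm_pow_four_schrodingerSol_le_sum_fiber θ c S π t
    _ = (Fintype.card κ : ℝ) ^ 3 * ∑ σ, ∫ t in (0 : ℝ)..1, ∫ x in Set.Icc (0 : ι → ℝ) 1,
          ‖schrodingerSol θ c {n ∈ S | π n = σ} t x‖ ^ 4 := by
        rw [intervalIntegral.integral_const_mul,
          intervalIntegral.integral_finsetSum fun σ _ => (hcont _).intervalIntegrable _ _]
    _ ≤ (Fintype.card κ : ℝ) ^ 3 * ∑ σ, A * (∑ n ∈ S with π n = σ, ‖c n‖ ^ 2) ^ 2 := by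
        gcongr with σ; exact hA σ
    _ ≤ (Fintype.card κ : ℝ) ^ 3 * A * (∑ n ∈ S, ‖c n‖ ^ 2) ^ 2 := by
        rw [← mul_sum, mul_assoc, ← sum_fiberwise S π]
        gcongr
        exact sum_sq_le_sq_sum_of_nonneg fun σ _ => by positivity

lemma finsum_eq_schrodingerSol (θ : ι → ℝ) {c : (ι → ℤ) → ℂ} {D : Finset (ι → ℤ)}
    (hc : ∀ n ∉ D, c n = 0) (t : ℝ) (x : ι → ℝ) :
    ∑ᶠ n, c n * torusChar n x * exp (-I * t * ∑ j, (θ j : ℂ) * (n j : ℂ) ^ 2) =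
      schrodingerSol θ c D t x := by
  rw [finsum_eq_sum_of_support_subset (s := D) _ fun n hn => ?_]
  · simp [schrodingerSol, quadForm]
  · by_contra hnD
    exact hn (by simp [hc n hnD])

def cube [DecidableEq ι] (N : ℕ) : Finset (ι → ℤ) := Fintype.piFinset fun _ => Icc (-(N : ℤ)) N

def signPattern (n : ι → ℤ) : ι → Bool := fun j => decide (0 < n j)

lemma abs_sub_le_of_signPattern_eq [DecidableEq ι] {N : ℕ} {p q : ι → ℤ} (hp : p ∈ cube N)
    (hq : q ∈ cube N) (h : signPattern p = signPattern q) (j : ι) : |p j - q j| ≤ N := by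
  have hpj := mem_Icc.mp (Fintype.mem_piFinset.mp hp j)
  have hqj := mem_Icc.mp (Fintype.mem_piFinset.mp hq j)
  have hsign := congrFun h j
  simp only [signPattern, decide_eq_decide] at hsign
  rw [abs_le]
  omega

end Strichartz

end

open Strichartz

theorem strichartz_le_degeneracy_factor_general (d : ℕ) :
    ∃ C : ℝ, 0 < C ∧
      ∀ (θmin θmax : ℝ), 0 < θmin → θmin ≤ θmax →
      ∀ (θ : Fin d → ℝ), (∀ j, θmin ≤ θ j ∧ θ j ≤ θmax) →
      ∀ (N : ℕ), 1 ≤ N →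
      ∀ (c : (Fin d → ℤ) → ℂ), (∀ n : Fin d → ℤ, (∃ j, (N : ℤ) < |n j|) → c n = 0) →
      (∫ t in (0:ℝ)..1, ∫ x in Set.Icc (0 : Fin d → ℝ) 1,
          ‖∑ᶠ n : Fin d → ℤ,
              c n * Complex.exp (2 * Real.pi * Complex.I * ∑ j, (n j : ℂ) * (x j : ℂ)) *
                Complex.exp (-Complex.I * (t : ℂ) * ∑ j, (θ j : ℂ) * (n j : ℂ) ^ 2)‖ ^ 4)
        ≤ C * (⨆ ℓ : ℝ, (Set.ncard {m : Fin d → ℤ |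
                (∀ j, |m j| ≤ (N : ℤ)) ∧ |(∑ j, θ j * (m j : ℝ) ^ 2) - ℓ| ≤ 1} : ℝ)) *
            (∑ᶠ n : Fin d → ℤ, ‖c n‖ ^ 2) ^ 2 := by
  refine ⟨(2 ^ d) ^ 3 * 192, by positivity, fun _ _ _ _ θ _ N _ c hc => ?_⟩
  have hsupp : ∀ n ∉ cube N, c n = 0 := fun n hn => hc n <| by
    simpa [cube, Fintype.mem_piFinset, ← abs_le] using hn
  have hu := finsum_eq_schrodingerSol θ hsupp
  have hl2 : ∑ᶠ n, ‖c n‖ ^ 2 = ∑ n ∈ cube N, ‖c n‖ ^ 2 :=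
    finsum_eq_sum_of_support_subset _ fun n hn => by
      by_contra hnD
      exact hn (by simp [hsupp n hnD])
  simp only [torusChar] at hu
  simp only [hu, hl2]
  change _ ≤ _ * degeneracyFactor θ N * _
  have := integral_integral_norm_pow_four_schrodingerSol_le_of_fiberwise θ c (cube N) signPattern
    (mul_nonneg (by norm_num) (degeneracyFactor_nonneg θ N)) fun σ =>
      integral_integral_norm_pow_four_schrodingerSol_le θ c fun p hp q hq =>
        abs_sub_le_of_signPattern_eq (mem_filter.mp hp).1 (mem_filter.mp hq).1
          ((mem_filter.mp hp).2.trans (mem_filter.mp hq).2.symm)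
  rw [Fintype.card_fun, Fintype.card_bool, Fintype.card_fin] at this
  exact this.trans_eq (by push_cast; ring)

/-- Lemma 1: the `L⁴` Strichartz norm is controlled by the supremum over `ℓ ∈ ℝ` of the
number of lattice points `m ∈ [-N,N]^d` with `|Q(m) - ℓ| ≤ 1` (the near-degeneracy
factor), with a constant depending only on `d`. -/
theorem strichartz_le_degeneracy_factor (d : ℕ) (hd : 1 ≤ d) :
    ∃ C : ℝ, 0 < C ∧
      ∀ (θmin θmax : ℝ), 0 < θmin → θmin ≤ θmax →
      ∀ (θ : Fin d → ℝ), (∀ j, θmin ≤ θ j ∧ θ j ≤ θmax) →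
      ∀ (N : ℕ), 1 ≤ N →
      ∀ (c : (Fin d → ℤ) → ℂ), (∀ n : Fin d → ℤ, (∃ j, (N : ℤ) < |n j|) → c n = 0) →
      (∫ t in (0:ℝ)..1, ∫ x in Set.Icc (0 : Fin d → ℝ) 1,
          ‖∑ᶠ n : Fin d → ℤ,
              c n * Complex.exp (2 * Real.pi * Complex.I * ∑ j, (n j : ℂ) * (x j : ℂ)) *
                Complex.exp (-Complex.I * (t : ℂ) * ∑ j, (θ j : ℂ) * (n j : ℂ) ^ 2)‖ ^ 4)
        ≤ C * (⨆ ℓ : ℝ, (Set.ncard {m : Fin d → ℤ |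
                (∀ j, |m j| ≤ (N : ℤ)) ∧ |(∑ j, θ j * (m j : ℝ) ^ 2) - ℓ| ≤ 1} : ℝ)) *
            (∑ᶠ n : Fin d → ℤ, ‖c n‖ ^ 2) ^ 2 :=
  strichartz_le_degeneracy_factor_general d
end

section
/- (Lemma 2: almost orthogonality via Schur's test.) There exists an absolute constant C with the following property. Let H be a complex Hilbert space and let (h_k)_{k∈ℤ} be a finitely supported family of vectors of H such that for all ℓ, m ∈ ℤ one has |⟨h_ℓ, h_m⟩| ≤ ‖h_ℓ‖ · ‖h_m‖ / (1 + (ℓ − m)²). Then ‖Σ_{k∈ℤ} h_k‖² ≤ C · Σ_{k∈ℤ} ‖h_k‖². -/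
/-! Expanding `‖∑ h_k‖²` bounds it by `∑_{ℓ,m} ‖h_ℓ‖ ‖h_m‖ K(ℓ - m)` with `K n = 1 / (1 + n²)`.
Schur's test bounds such a quadratic form by `(∑_n K n) ∑ ‖h_k‖²`: by AM-GM,
`a_ℓ a_m ≤ (a_ℓ² + a_m²) / 2`, and every row and column sum of the kernel is at most `∑_n K n`,
which is finite. -/

open Finset

theorem sum_sum_mul_mul_le_of_sum_le {ι : Type*} (s : Finset ι) (a : ι → ℝ) (K : ι → ι → ℝ)
    (B : ℝ) (hK : ∀ i ∈ s, ∀ j ∈ s, 0 ≤ K i j) (hrow : ∀ i ∈ s, ∑ j ∈ s, K i j ≤ B)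
    (hcol : ∀ j ∈ s, ∑ i ∈ s, K i j ≤ B) :
    ∑ i ∈ s, ∑ j ∈ s, a i * a j * K i j ≤ B * ∑ i ∈ s, a i ^ 2 :=
  calc ∑ i ∈ s, ∑ j ∈ s, a i * a j * K i j
      ≤ ∑ i ∈ s, ∑ j ∈ s, (a i ^ 2 * K i j + a j ^ 2 * K i j) / 2 := by
        refine sum_le_sum fun i hi => sum_le_sum fun j hj => ?_
        nlinarith [mul_nonneg (sq_nonneg (a i - a j)) (hK i hi j hj)]
    _ = (∑ i ∈ s, a i ^ 2 * ∑ j ∈ s, K i j + ∑ j ∈ s, a j ^ 2 * ∑ i ∈ s, K i j) / 2 := by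
        simp only [← sum_div, sum_add_distrib, mul_sum]
        rw [sum_comm (f := fun i j => a j ^ 2 * K i j)]
    _ ≤ (∑ i ∈ s, a i ^ 2 * B + ∑ j ∈ s, a j ^ 2 * B) / 2 := by
        gcongr with i hi j hj
        · exact hrow i hi
        · exact hcol j hj
    _ = B * ∑ i ∈ s, a i ^ 2 := by rw [← sum_mul]; ring

theorem norm_sum_sq_le_sum_sum_norm_inner {𝕜 E ι : Type*} [RCLike 𝕜] [NormedAddCommGroup E]
    [InnerProductSpace 𝕜 E] (s : Finset ι) (v : ι → E) :
    ‖∑ i ∈ s, v i‖ ^ 2 ≤ ∑ i ∈ s, ∑ j ∈ s, ‖(inner 𝕜 (v i) (v j) : 𝕜)‖ :=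
  calc ‖∑ i ∈ s, v i‖ ^ 2
      = RCLike.re (inner 𝕜 (∑ i ∈ s, v i) (∑ j ∈ s, v j)) := (inner_self_eq_norm_sq _).symm
    _ ≤ ‖(inner 𝕜 (∑ i ∈ s, v i) (∑ j ∈ s, v j) : 𝕜)‖ := RCLike.re_le_norm _
    _ = ‖∑ i ∈ s, ∑ j ∈ s, (inner 𝕜 (v i) (v j) : 𝕜)‖ := by
        rw [sum_inner]; simp_rw [inner_sum]
    _ ≤ ∑ i ∈ s, ∑ j ∈ s, ‖(inner 𝕜 (v i) (v j) : 𝕜)‖ :=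
        (norm_sum_le _ _).trans (sum_le_sum fun i _ => norm_sum_le _ _)

theorem sum_comp_equiv_le_tsum {ι κ : Type*} {f : κ → ℝ} (hf : Summable f) (hf₀ : ∀ k, 0 ≤ f k)
    (e : ι ≃ κ) (s : Finset ι) : ∑ i ∈ s, f (e i) ≤ ∑' k, f k := by
  rw [← e.tsum_eq]
  exact (e.summable_iff.mpr hf).sum_le_tsum s fun _ _ => hf₀ _

theorem summable_one_div_one_add_sq_int : Summable fun n : ℤ => 1 / (1 + (n : ℝ) ^ 2) := by
  refine .of_norm_bounded_eventually (Real.summable_one_div_int_pow.mpr one_lt_two) ?_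
  filter_upwards [(Set.finite_singleton (0 : ℤ)).compl_mem_cofinite] with n hn
  have hn : (n : ℝ) ≠ 0 := Int.cast_ne_zero.mpr hn
  rw [Real.norm_of_nonneg (by positivity)]
  gcongr
  linarith

/-- Lemma 2: almost orthogonality via Schur's test. If the pairwise inner products of a
finitely supported family `(h_k)_{k ∈ ℤ}` of vectors of a complex Hilbert space decay like
`‖h_ℓ‖ ‖h_m‖ / (1 + (ℓ - m)²)`, then `‖Σ h_k‖² ≤ C Σ ‖h_k‖²` for an absolute constant `C`. -/
theorem almost_orthogonality_schur :
    ∃ C : ℝ, 0 < C ∧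
      ∀ (H : Type*) [NormedAddCommGroup H] [InnerProductSpace ℂ H] [CompleteSpace H],
      ∀ (h : ℤ → H), (Function.support h).Finite →
      (∀ ℓ m : ℤ, ‖(inner ℂ (h ℓ) (h m) : ℂ)‖ ≤ ‖h ℓ‖ * ‖h m‖ / (1 + ((ℓ : ℝ) - (m : ℝ)) ^ 2)) →
      ‖∑ᶠ k : ℤ, h k‖ ^ 2 ≤ C * ∑ᶠ k : ℤ, ‖h k‖ ^ 2 := by
  set K : ℤ → ℝ := fun n => 1 / (1 + (n : ℝ) ^ 2)
  have hK₀ : ∀ n, 0 ≤ K n := fun n => by positivity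
  refine ⟨∑' n, K n, summable_one_div_one_add_sq_int.tsum_pos hK₀ 0 (by positivity), ?_⟩
  intro H _ _ _ h hfin hdecay
  set s := hfin.toFinset
  have hsupp : Function.support (fun k => ‖h k‖ ^ 2) ⊆ s :=
    (Function.support_comp_subset (g := fun x : H => ‖x‖ ^ 2) (by simp) h).trans_eq
      hfin.coe_toFinset.symm
  rw [finsum_eq_sum h hfin, finsum_eq_sum_of_support_subset _ hsupp]
  calc ‖∑ k ∈ s, h k‖ ^ 2
      ≤ ∑ ℓ ∈ s, ∑ m ∈ s, ‖(inner ℂ (h ℓ) (h m) : ℂ)‖ := norm_sum_sq_le_sum_sum_norm_inner s h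
    _ ≤ ∑ ℓ ∈ s, ∑ m ∈ s, ‖h ℓ‖ * ‖h m‖ * K (ℓ - m) := by
        gcongr with ℓ _ m _
        rw [mul_one_div]
        exact_mod_cast hdecay ℓ m
    _ ≤ (∑' n, K n) * ∑ k ∈ s, ‖h k‖ ^ 2 :=
        sum_sum_mul_mul_le_of_sum_le s _ _ _ (fun _ _ _ _ => hK₀ _)
          (fun ℓ _ => sum_comp_equiv_le_tsum summable_one_div_one_add_sq_int hK₀
            (Equiv.subLeft ℓ) s)
          (fun m _ => sum_comp_equiv_le_tsum summable_one_div_one_add_sq_int hK₀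
            (Equiv.subRight m) s)
end

section
/- (Lemma 3, odd case: lattice point count in an ellipsoidal annulus.) For every odd integer d ≥ 3 and every ε > 0 there exists a constant C, depending only on d, ε, θ_min and θ_max, such that for every real N ≥ 1 and every ℓ ∈ ℝ, the number of points m ∈ ℤ^d with |m_j| ≤ N for all j and |Q(m) − ℓ| ≤ 1 is at most C · N^{d − 2d/(d+1) + ε}. -/
/-!
Smooth the condition `|Q(m) - ℓ| ≤ 1` with the Fejér weight
`w(t) = 2 ∫₀¹ (1 - x) cos (t x) dx = 2 (1 - cos t) / t²`, which is nonnegative and at least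
`cos 1` on `[-1, 1]`. Summed over the box `[-K, K]^d`, `K = ⌊N⌋`, the weights equal
`2 ∫₀¹ (1 - x) Re (e^{-iℓx} ∏ⱼ Sⱼ(x)) dx` with `Sⱼ(x) = ∑_{|n| ≤ K} e^{i θⱼ n² x}`, so the count is
`≪ ∑ⱼ ∫₀¹ |Sⱼ|^d`.

Expanding `|S|⁴` and integrating, `∫₀¹ |S|⁴ ≪ (1 + θ⁻¹) ∑ 1 / (1 + |p₁² + p₂² - q₁² - q₂²|)` over
`p, q ∈ [-K, K]²`. As `p₁² + p₂² - q₁² - q₂²` is the dot product of `p - q` and `p + q`, and for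
fixed `x` the first coordinates of the solutions `y` of `x · y = w` lie in one residue class
modulo `|x₂| / gcd x`, every value is taken `≪ K² log² K` times; hence
`∫₀¹ |S|⁴ ≪ K² log³ K ≪ N^{2+ε}`. With `|S| ≤ 3N` this gives `∫₀¹ |S|^d ≪ N^{d-2+ε}` for
`d ≥ 4`, and `a³ ≤ a⁴ / √N + N^{3/2}` gives `∫₀¹ |S|³ ≪ N^{3/2+ε}`; both exponents are at most
`d - 2d/(d+1) + ε`.
-/

open Finset Real

noncomputable abbrev symmIcc (M : ℕ) : Finset ℤ := Icc (-(M : ℤ)) M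

lemma card_symmIcc (M : ℕ) : #(symmIcc M) = 2 * M + 1 := by
  rw [Int.card_Icc]; omega

lemma symmIcc_subset (M : ℕ) : symmIcc M ⊆ Icc (-(M : ℤ)) (-(M : ℤ) + (2 * M : ℕ)) := by
  intro y hy; simp only [mem_Icc] at hy ⊢; push_cast; omega

lemma harmonic_cast_eq_sum_Icc (M : ℕ) : (harmonic M : ℝ) = ∑ k ∈ Icc 1 M, (k : ℝ)⁻¹ := by
  rw [harmonic_eq_sum_Icc]; push_cast; rfl

lemma harmonic_cast_nonneg (M : ℕ) : (0 : ℝ) ≤ harmonic M := by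
  rw [harmonic_cast_eq_sum_Icc]; positivity

lemma one_add_harmonic_le_mul_rpow {δ : ℝ} (hδ : 0 < δ) {n : ℕ} (hn : 1 ≤ n) {X : ℝ}
    (hnX : (n : ℝ) ≤ X) : 1 + (harmonic n : ℝ) ≤ (2 + δ⁻¹) * X ^ δ := by
  have hn' : (1 : ℝ) ≤ n := by exact_mod_cast hn
  have hpow : (n : ℝ) ^ δ ≤ X ^ δ := rpow_le_rpow (by positivity) hnX hδ.le
  have hone : (1 : ℝ) ≤ (n : ℝ) ^ δ := one_le_rpow hn' hδ.le
  have hlog := log_le_rpow_div (by positivity : (0 : ℝ) ≤ n) hδ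
  have := harmonic_le_one_add_log n
  rw [div_eq_mul_inv] at hlog
  nlinarith [inv_pos.2 hδ]

lemma sum_symmIcc_natAbs {R : Type*} [AddCommMonoid R] (g : ℕ → R) (M : ℕ) :
    ∑ u ∈ symmIcc M, g u.natAbs = g 0 + 2 • ∑ k ∈ Icc 1 M, g k := by
  induction M with
  | zero => simp [symmIcc]
  | succ M ih =>
    have hsplit : symmIcc (M + 1) = insert (-(M + 1 : ℤ)) (insert (M + 1 : ℤ) (symmIcc M)) := by
      ext u; simp only [mem_Icc, mem_insert]; push_cast; omega
    have h₁ : -(M + 1 : ℤ) ∉ insert (M + 1 : ℤ) (symmIcc M) := by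
      simp only [mem_Icc, mem_insert]; omega
    have h₂ : (M + 1 : ℤ) ∉ symmIcc M := by simp only [mem_Icc]; omega
    rw [hsplit, sum_insert h₁, sum_insert h₂, ih, sum_Icc_succ_top (by omega)]
    have e₁ : (-(M + 1 : ℤ)).natAbs = M + 1 := by omega
    have e₂ : (M + 1 : ℤ).natAbs = M + 1 := by omega
    rw [e₁, e₂, smul_add, two_nsmul (g (M + 1))]
    abel

-- The term `u = 0` contributes `|0|⁻¹ = 0`.
lemma sum_symmIcc_inv_abs (M : ℕ) :
    ∑ u ∈ symmIcc M, |(u : ℝ)|⁻¹ = 2 * (harmonic M : ℝ) := by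
  have h := sum_symmIcc_natAbs (fun k : ℕ => (k : ℝ)⁻¹) M
  simp only [Nat.cast_natAbs, Int.cast_abs, CharP.cast_eq_zero, inv_zero, zero_add,
    nsmul_eq_mul, Nat.cast_ofNat] at h
  rw [h, harmonic_cast_eq_sum_Icc]

lemma sum_symmIcc_inv_one_add_abs_le (M : ℕ) :
    ∑ u ∈ symmIcc M, (1 + |(u : ℝ)|)⁻¹ ≤ 1 + 2 * (harmonic M : ℝ) := by
  have h := sum_symmIcc_natAbs (fun k : ℕ => (1 + (k : ℝ))⁻¹) M
  simp only [Nat.cast_natAbs, Int.cast_abs, CharP.cast_eq_zero, add_zero, inv_one,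
    nsmul_eq_mul, Nat.cast_ofNat] at h
  rw [h, harmonic_cast_eq_sum_Icc]
  gcongr with k hk
  · exact Nat.cast_pos.2 (mem_Icc.1 hk).1
  · linarith

lemma card_le_div_add_one_of_modEq {t : Finset ℤ} {a : ℤ} {L s : ℕ} (hs : 0 < s)
    (ht : t ⊆ Icc a (a + L)) (hmod : ∀ y ∈ t, ∀ y' ∈ t, y ≡ y' [ZMOD s]) :
    #t ≤ L / s + 1 := by
  rcases t.eq_empty_or_nonempty with rfl | hne
  · simp
  set y₀ := t.min' hne
  have hy₀ : y₀ ∈ t := t.min'_mem hne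
  have hdvd : ∀ y ∈ t, (s : ℤ) ∣ y - y₀ := fun y hy => (hmod y₀ hy₀ y hy).dvd
  have hs' : (0 : ℤ) < s := by exact_mod_cast hs
  calc #t ≤ #(Icc (0 : ℤ) (L / s : ℕ)) := by
        refine card_le_card_of_injOn (fun y => (y - y₀) / s) (fun y hy => ?_) ?_
        · have h₁ := t.min'_le y hy
          have h₂ := mem_Icc.1 (ht hy)
          have h₃ := mem_Icc.1 (ht hy₀)
          rw [coe_Icc, Set.mem_Icc, Int.natCast_div]
          exact ⟨Int.ediv_nonneg (by omega) hs'.le, Int.ediv_le_ediv hs' (by omega)⟩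
        · intro y hy y' hy' h
          have e := Int.ediv_mul_cancel (hdvd y hy)
          have e' := Int.ediv_mul_cancel (hdvd y' hy')
          simp only at h
          rw [h] at e
          omega
    _ = L / s + 1 := by
      rw [Int.card_Icc, sub_zero, ← Nat.cast_add_one, Int.toNat_natCast]

lemma card_filter_dvd_le (M : ℕ) {k : ℕ} (hk : 0 < k) :
    #{x ∈ symmIcc M | (k : ℤ) ∣ x} ≤ 2 * M / k + 1 :=
  card_le_div_add_one_of_modEq hk ((filter_subset _ _).trans (symmIcc_subset M))
    fun _ hy _ hy' => (Int.emod_eq_zero_of_dvd (mem_filter.1 hy).2).trans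
      (Int.emod_eq_zero_of_dvd (mem_filter.1 hy').2).symm

lemma card_linear_eq_le (M : ℕ) (x₁ : ℤ) {x₂ : ℤ} (hx₂ : x₂ ≠ 0) (w : ℤ) :
    (#{y ∈ symmIcc M ×ˢ symmIcc M | x₁ * y.1 + x₂ * y.2 = w} : ℝ)
      ≤ 2 * M * Int.gcd x₁ x₂ / |(x₂ : ℝ)| + 1 := by
  set sol := {y ∈ symmIcc M ×ˢ symmIcc M | x₁ * y.1 + x₂ * y.2 = w}
  set g := Int.gcd x₁ x₂
  set s := x₂.natAbs / g
  have hg : 0 < g := Int.gcd_pos_of_ne_zero_right x₁ hx₂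
  have hgs : s * g = x₂.natAbs := Nat.div_mul_cancel (Int.gcd_dvd_natAbs_right x₁ x₂)
  have hs : 0 < s := Nat.pos_of_ne_zero fun h => by simp [h] at hgs; omega
  -- the solution is determined by `y₁`, and the possible `y₁` form a progression modulo `s`
  have hinj : Set.InjOn Prod.fst (sol : Set (ℤ × ℤ)) := by
    intro y hy y' hy' h
    simp only [sol, coe_filter, Set.mem_ofPred_eq] at hy hy'
    refine Prod.ext h (mul_left_cancel₀ hx₂ ?_)
    rw [h] at hy
    linarith [hy.2, hy'.2]
  have hmod : ∀ y ∈ sol.image Prod.fst, ∀ y' ∈ sol.image Prod.fst, y ≡ y' [ZMOD s] := by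
    simp only [mem_image, sol, mem_filter]
    rintro _ ⟨y, ⟨-, hy⟩, rfl⟩ _ ⟨y', ⟨-, hy'⟩, rfl⟩
    have hx : x₁ * y.1 ≡ x₁ * y'.1 [ZMOD |x₂|] :=
      Int.modEq_iff_dvd.2 ((abs_dvd _ _).2 ⟨y.2 - y'.2, by linarith⟩)
    have hs_eq : |x₂| / ((Int.gcd |x₂| x₁ : ℕ) : ℤ) = s := by
      rw [Int.gcd_comm, Int.gcd_eq_natAbs, Int.natAbs_abs, ← Int.gcd_eq_natAbs,
        ← Int.natCast_natAbs, ← Int.natCast_div]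
    exact hs_eq ▸ Int.ModEq.cancel_left_div_gcd (abs_pos.2 hx₂) hx
  have hsub : sol.image Prod.fst ⊆ Icc (-(M : ℤ)) (-(M : ℤ) + (2 * M : ℕ)) := by
    refine (image_subset_iff.2 fun y hy => ?_).trans (symmIcc_subset M)
    exact (mem_product.1 (mem_filter.1 hy).1).1
  have hcard := card_le_div_add_one_of_modEq hs hsub hmod
  rw [card_image_of_injOn hinj] at hcard
  have habs : |(x₂ : ℝ)| = s * g := by
    rw [← Int.cast_abs, ← Int.natCast_natAbs, ← hgs]; push_cast; ring
  calc (#sol : ℝ) ≤ ((2 * M / s : ℕ) : ℝ) + 1 := by exact_mod_cast hcard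
    _ ≤ (2 * M : ℕ) / (s : ℝ) + 1 := by gcongr; exact Nat.cast_div_le
    _ = 2 * M * g / |(x₂ : ℝ)| + 1 := by
      rw [habs]; push_cast; field_simp

lemma sum_filter_dvd_mul_inv_abs_le (M : ℕ) {k : ℕ} (hk : 0 < k) :
    ∑ x ∈ symmIcc M with (k : ℤ) ∣ x, (k : ℝ) * |(x : ℝ)|⁻¹ ≤ 2 * (harmonic M : ℝ) := by
  have hsub : {x ∈ symmIcc M | (k : ℤ) ∣ x} ⊆ (symmIcc M).image ((k : ℤ) * ·) := by
    intro x hx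
    obtain ⟨hx, j, rfl⟩ := mem_filter.1 hx
    refine mem_image.2 ⟨j, ?_, rfl⟩
    simp only [mem_Icc] at hx ⊢
    constructor <;> nlinarith
  have hk' : (0 : ℝ) < k := by exact_mod_cast hk
  calc ∑ x ∈ symmIcc M with (k : ℤ) ∣ x, (k : ℝ) * |(x : ℝ)|⁻¹
      ≤ ∑ x ∈ (symmIcc M).image ((k : ℤ) * ·), (k : ℝ) * |(x : ℝ)|⁻¹ :=
        sum_le_sum_of_subset_of_nonneg hsub fun _ _ _ => by positivity
    _ ≤ ∑ j ∈ symmIcc M, (k : ℝ) * |((k * j : ℤ) : ℝ)|⁻¹ :=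
        sum_image_le_of_nonneg fun _ _ => by positivity
    _ = 2 * (harmonic M : ℝ) := by
        rw [← sum_symmIcc_inv_abs]
        refine sum_congr rfl fun j _ => ?_
        rw [Int.cast_mul, Int.cast_natCast, abs_mul, abs_of_pos hk', mul_inv, ← mul_assoc,
          mul_inv_cancel₀ hk'.ne', one_mul]

lemma gcd_mul_inv_abs_le_sum_dvd (M : ℕ) (x : ℤ × ℤ) (hx : x.2 ∈ symmIcc M) :
    (Int.gcd x.1 x.2 : ℝ) * |(x.2 : ℝ)|⁻¹ ≤ ∑ k ∈ Icc 1 M,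
      (if (k : ℤ) ∣ x.1 then 1 else 0) *
        (if (k : ℤ) ∣ x.2 then (k : ℝ) * |(x.2 : ℝ)|⁻¹ else 0) := by
  have hnonneg : ∀ k ∈ Icc 1 M, 0 ≤ (if (k : ℤ) ∣ x.1 then (1 : ℝ) else 0) *
      (if (k : ℤ) ∣ x.2 then (k : ℝ) * |(x.2 : ℝ)|⁻¹ else 0) := fun k _ => by
    apply mul_nonneg <;> split_ifs <;> positivity
  rcases eq_or_ne x.2 0 with h | h
  · simp [h]
  have hgM : Int.gcd x.1 x.2 ∈ Icc 1 M := by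
    have := Nat.le_of_dvd (Int.natAbs_pos.2 h) (Int.gcd_dvd_natAbs_right x.1 x.2)
    simp only [mem_Icc] at hx ⊢
    exact ⟨Int.gcd_pos_of_ne_zero_right _ h, by omega⟩
  refine le_of_eq_of_le ?_ (single_le_sum hnonneg hgM)
  rw [if_pos (Int.gcd_dvd_left _ _), if_pos (Int.gcd_dvd_right _ _), one_mul]

lemma sum_gcd_mul_inv_abs_le (M : ℕ) (hM : 1 ≤ M) :
    ∑ x ∈ symmIcc M ×ˢ symmIcc M, (Int.gcd x.1 x.2 : ℝ) * |(x.2 : ℝ)|⁻¹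
      ≤ 6 * M * (harmonic M : ℝ) ^ 2 := by
  have hmult : ∀ k ∈ Icc 1 M, (#{x ∈ symmIcc M | (k : ℤ) ∣ x} : ℝ) ≤ 3 * M / k := by
    intro k hk
    obtain ⟨hk1, hkM⟩ := mem_Icc.1 hk
    have hk' : (0 : ℝ) < k := by exact_mod_cast hk1
    have hkM' : (k : ℝ) ≤ M := by exact_mod_cast hkM
    calc (#{x ∈ symmIcc M | (k : ℤ) ∣ x} : ℝ) ≤ ((2 * M / k : ℕ) : ℝ) + 1 := by
          exact_mod_cast card_filter_dvd_le M hk1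
      _ ≤ (2 * M : ℕ) / (k : ℝ) + 1 := by gcongr; exact Nat.cast_div_le
      _ ≤ 3 * M / k := by
          rw [div_add_one hk'.ne', Nat.cast_mul, Nat.cast_ofNat]; gcongr; linarith
  calc ∑ x ∈ symmIcc M ×ˢ symmIcc M, (Int.gcd x.1 x.2 : ℝ) * |(x.2 : ℝ)|⁻¹
      ≤ ∑ x ∈ symmIcc M ×ˢ symmIcc M, ∑ k ∈ Icc 1 M, (if (k : ℤ) ∣ x.1 then 1 else 0) *
          (if (k : ℤ) ∣ x.2 then (k : ℝ) * |(x.2 : ℝ)|⁻¹ else 0) :=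
        sum_le_sum fun x hx => gcd_mul_inv_abs_le_sum_dvd M x (mem_product.1 hx).2
    _ = ∑ k ∈ Icc 1 M, (#{x ∈ symmIcc M | (k : ℤ) ∣ x} : ℝ) *
          ∑ x ∈ symmIcc M with (k : ℤ) ∣ x, (k : ℝ) * |(x : ℝ)|⁻¹ := by
        rw [sum_comm]
        refine sum_congr rfl fun k _ => ?_
        rw [sum_product, sum_filter, ← sum_boole, sum_mul_sum]
    _ ≤ ∑ k ∈ Icc 1 M, 3 * M / k * (2 * (harmonic M : ℝ)) := by
        refine sum_le_sum fun k hk => mul_le_mul (hmult k hk)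
          (sum_filter_dvd_mul_inv_abs_le M (mem_Icc.1 hk).1)
          (sum_nonneg fun _ _ => by positivity) (by positivity)
    _ = 6 * M * harmonic M * ∑ k ∈ Icc 1 M, (k : ℝ)⁻¹ := by
        rw [mul_sum]; exact sum_congr rfl fun k _ => by ring
    _ = 6 * M * (harmonic M : ℝ) ^ 2 := by rw [← harmonic_cast_eq_sum_Icc]; ring

/-- A bound, uniform in `w`, for the number of `y ∈ [-M, M]²` with `x₁ y₁ + x₂ y₂ = w`.
For `x₂ = 0` the first term vanishes, since `|0|⁻¹ = 0`. -/
noncomputable def dotFiberBound (M : ℕ) (x : ℤ × ℤ) : ℝ :=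
  2 * M * Int.gcd x.1 x.2 * |(x.2 : ℝ)|⁻¹ + 1 + (if x.2 = 0 then 2 * (M : ℝ) else 0)
    + (if x = 0 then (2 * (M : ℝ) + 1) ^ 2 else 0)

lemma card_dot_eq_le_dotFiberBound (M : ℕ) (x : ℤ × ℤ) (w : ℤ) :
    (#{y ∈ symmIcc M ×ˢ symmIcc M | x.1 * y.1 + x.2 * y.2 = w} : ℝ) ≤ dotFiberBound M x := by
  set sol := {y ∈ symmIcc M ×ˢ symmIcc M | x.1 * y.1 + x.2 * y.2 = w}
  by_cases hx₂ : x.2 = 0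
  swap
  · have hx : x ≠ 0 := fun h => hx₂ (by simp [h])
    rw [dotFiberBound, if_neg hx₂, if_neg hx, ← div_eq_mul_inv]
    linarith [card_linear_eq_le M x.1 hx₂ w]
  by_cases hx₁ : x.1 = 0
  · have hsol : #sol ≤ (2 * M + 1) ^ 2 := by
      rw [sq, ← card_symmIcc, ← card_product]; exact card_filter_le _ _
    have hsol' : (#sol : ℝ) ≤ (2 * M + 1) ^ 2 := by exact_mod_cast hsol
    rw [dotFiberBound, if_pos hx₂, if_pos (Prod.ext hx₁ hx₂)]
    have : 0 ≤ 2 * M * Int.gcd x.1 x.2 * |(x.2 : ℝ)|⁻¹ := by positivity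
    linarith
  have hinj : Set.InjOn Prod.snd (sol : Set (ℤ × ℤ)) := by
    intro y hy y' hy' h
    simp only [sol, coe_filter, Set.mem_ofPred_eq, hx₂, zero_mul, add_zero] at hy hy'
    exact Prod.ext (mul_left_cancel₀ hx₁ (hy.2.trans hy'.2.symm)) h
  have hsol : #sol ≤ 2 * M + 1 := by
    rw [← card_symmIcc M, ← card_image_of_injOn hinj]
    exact card_le_card (image_subset_iff.2 fun y hy => (mem_product.1 (mem_filter.1 hy).1).2)
  have hsol' : (#sol : ℝ) ≤ 2 * M + 1 := by exact_mod_cast hsol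
  rw [dotFiberBound, if_pos hx₂, if_neg fun h => hx₁ (by simp [h]), hx₂]
  simp only [Int.cast_zero, abs_zero, inv_zero, mul_zero, zero_add, add_zero]
  linarith

lemma sum_dotFiberBound_le (M : ℕ) (hM : 1 ≤ M) :
    ∑ x ∈ symmIcc M ×ˢ symmIcc M, dotFiberBound M x
      ≤ 24 * (M : ℝ) ^ 2 * (1 + harmonic M : ℝ) ^ 2 := by
  have h₁ : ∑ x ∈ symmIcc M ×ˢ symmIcc M, 2 * M * (Int.gcd x.1 x.2 : ℝ) * |(x.2 : ℝ)|⁻¹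
      = 2 * M * ∑ x ∈ symmIcc M ×ˢ symmIcc M, (Int.gcd x.1 x.2 : ℝ) * |(x.2 : ℝ)|⁻¹ := by
    rw [mul_sum]; simp only [mul_assoc]
  have h₂ : ∑ x ∈ symmIcc M ×ˢ symmIcc M, (if x.2 = 0 then 2 * (M : ℝ) else 0)
      = (2 * M + 1) * (2 * M) := by
    rw [sum_product]
    simp only [sum_ite_eq', show (0 : ℤ) ∈ symmIcc M by simp, if_true, sum_const,
      card_symmIcc, nsmul_eq_mul]
    push_cast; ring
  have h₃ : ∑ x ∈ symmIcc M ×ˢ symmIcc M, (if x = 0 then (2 * (M : ℝ) + 1) ^ 2 else 0)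
      = (2 * (M : ℝ) + 1) ^ 2 := by
    simp
  have h₄ : ∑ x ∈ symmIcc M ×ˢ symmIcc M, (1 : ℝ) = (2 * (M : ℝ) + 1) ^ 2 := by
    rw [sum_const, card_product, card_symmIcc]; simp; ring
  simp only [dotFiberBound, sum_add_distrib, h₁, h₂, h₃, h₄]
  have hM' : (1 : ℝ) ≤ M := by exact_mod_cast hM
  have hH := harmonic_cast_nonneg M
  have := mul_le_mul_of_nonneg_left (sum_gcd_mul_inv_abs_le M hM) (by positivity : (0 : ℝ) ≤ 2 * M)
  nlinarith [mul_nonneg (mul_nonneg hH hH) (sq_nonneg (M : ℝ)), mul_nonneg hH (sq_nonneg (M : ℝ))]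

lemma sum_le_mul_sum_of_card_fiber_le {ι κ : Type*} [DecidableEq κ] {s : Finset ι}
    {t : Finset κ} {g : ι → κ} (hg : ∀ i ∈ s, g i ∈ t) {f : κ → ℝ} (hf : ∀ k ∈ t, 0 ≤ f k)
    {c : ℝ} (hc : ∀ k ∈ t, (#{i ∈ s | g i = k} : ℝ) ≤ c) :
    ∑ i ∈ s, f (g i) ≤ c * ∑ k ∈ t, f k := by
  rw [← sum_fiberwise_of_maps_to hg, mul_sum]
  refine sum_le_sum fun k hk => ?_
  rw [sum_congr rfl fun i hi => congrArg f (mem_filter.1 hi).2, sum_const, nsmul_eq_mul]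
  exact mul_le_mul_of_nonneg_right (hc k hk) (hf k hk)

lemma sum_inv_one_add_abs_dot_le (M : ℕ) (hM : 1 ≤ M) :
    ∑ x ∈ symmIcc M ×ˢ symmIcc M, ∑ y ∈ symmIcc M ×ˢ symmIcc M,
      (1 + |((x.1 * y.1 + x.2 * y.2 : ℤ) : ℝ)|)⁻¹
      ≤ 24 * (M : ℝ) ^ 2 * (1 + harmonic M : ℝ) ^ 2 * (1 + 2 * harmonic (2 * M ^ 2) : ℝ) := by
  have hdot : ∀ x ∈ symmIcc M ×ˢ symmIcc M, ∀ y ∈ symmIcc M ×ˢ symmIcc M,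
      x.1 * y.1 + x.2 * y.2 ∈ symmIcc (2 * M ^ 2) := by
    simp only [mem_product, mem_Icc]
    intro x hx y hy
    push_cast
    constructor <;> nlinarith
  have hrow : ∀ x ∈ symmIcc M ×ˢ symmIcc M, ∑ y ∈ symmIcc M ×ˢ symmIcc M,
      (1 + |((x.1 * y.1 + x.2 * y.2 : ℤ) : ℝ)|)⁻¹
        ≤ dotFiberBound M x * (1 + 2 * harmonic (2 * M ^ 2) : ℝ) := fun x hx =>
    (sum_le_mul_sum_of_card_fiber_le (hdot x hx) (fun _ _ => by positivity)
      fun w _ => card_dot_eq_le_dotFiberBound M x w).trans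
      (mul_le_mul_of_nonneg_left (sum_symmIcc_inv_one_add_abs_le _)
        ((Nat.cast_nonneg _).trans (card_dot_eq_le_dotFiberBound M x 0)))
  calc _ ≤ ∑ x ∈ symmIcc M ×ˢ symmIcc M, dotFiberBound M x * (1 + 2 * harmonic (2 * M ^ 2) : ℝ) :=
        sum_le_sum hrow
    _ = (∑ x ∈ symmIcc M ×ˢ symmIcc M, dotFiberBound M x) * (1 + 2 * harmonic (2 * M ^ 2) : ℝ) :=
        (sum_mul _ _ _).symm
    _ ≤ _ := mul_le_mul_of_nonneg_right (sum_dotFiberBound_le M hM)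
        (by linarith [harmonic_cast_nonneg (2 * M ^ 2)])

lemma sum_inv_one_add_abs_sq_sub_le (K : ℕ) (hK : 1 ≤ K) :
    ∑ p ∈ symmIcc K ×ˢ symmIcc K, ∑ q ∈ symmIcc K ×ˢ symmIcc K,
      (1 + |((p.1 ^ 2 + p.2 ^ 2 - (q.1 ^ 2 + q.2 ^ 2) : ℤ) : ℝ)|)⁻¹
      ≤ 96 * (K : ℝ) ^ 2 * (1 + harmonic (2 * K) : ℝ) ^ 2
        * (1 + 2 * harmonic (8 * K ^ 2) : ℝ) := by
  -- `p₁² + p₂² - q₁² - q₂²` is the dot product of `p - q` and `p + q`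
  set φ : (ℤ × ℤ) × (ℤ × ℤ) → (ℤ × ℤ) × (ℤ × ℤ) := fun z =>
    ((z.1.1 - z.2.1, z.1.2 - z.2.2), (z.1.1 + z.2.1, z.1.2 + z.2.2)) with hφ
  have hinj : Set.InjOn φ ↑((symmIcc K ×ˢ symmIcc K) ×ˢ (symmIcc K ×ˢ symmIcc K)) := by
    intro z _ z' _ h
    simp only [hφ, Prod.mk.injEq] at h
    ext <;> omega
  have hmaps : ((symmIcc K ×ˢ symmIcc K) ×ˢ (symmIcc K ×ˢ symmIcc K)).image φ
      ⊆ (symmIcc (2 * K) ×ˢ symmIcc (2 * K)) ×ˢ (symmIcc (2 * K) ×ˢ symmIcc (2 * K)) := by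
    intro z hz
    obtain ⟨w, hw, rfl⟩ := mem_image.1 hz
    simp only [hφ, mem_product, mem_Icc] at hw ⊢
    push_cast
    omega
  calc _ = ∑ z ∈ (symmIcc K ×ˢ symmIcc K) ×ˢ (symmIcc K ×ˢ symmIcc K),
        (1 + |((z.1.1 ^ 2 + z.1.2 ^ 2 - (z.2.1 ^ 2 + z.2.2 ^ 2) : ℤ) : ℝ)|)⁻¹ :=
        (sum_product _ _ _).symm
    _ = ∑ z ∈ (symmIcc K ×ˢ symmIcc K) ×ˢ (symmIcc K ×ˢ symmIcc K),
        (1 + |(((φ z).1.1 * (φ z).2.1 + (φ z).1.2 * (φ z).2.2 : ℤ) : ℝ)|)⁻¹ :=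
        sum_congr rfl fun z _ => by simp only [hφ]; ring_nf
    _ = ∑ z ∈ ((symmIcc K ×ˢ symmIcc K) ×ˢ (symmIcc K ×ˢ symmIcc K)).image φ,
        (1 + |((z.1.1 * z.2.1 + z.1.2 * z.2.2 : ℤ) : ℝ)|)⁻¹ := by
        rw [sum_image hinj]
    _ ≤ ∑ z ∈ (symmIcc (2 * K) ×ˢ symmIcc (2 * K)) ×ˢ (symmIcc (2 * K) ×ˢ symmIcc (2 * K)),
        (1 + |((z.1.1 * z.2.1 + z.1.2 * z.2.2 : ℤ) : ℝ)|)⁻¹ :=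
        sum_le_sum_of_subset_of_nonneg hmaps fun _ _ _ => by positivity
    _ = ∑ x ∈ symmIcc (2 * K) ×ˢ symmIcc (2 * K), ∑ y ∈ symmIcc (2 * K) ×ˢ symmIcc (2 * K),
        (1 + |((x.1 * y.1 + x.2 * y.2 : ℤ) : ℝ)|)⁻¹ :=
        sum_product _ _ _
    _ ≤ _ := sum_inv_one_add_abs_dot_le (2 * K) (by omega)
    _ = _ := by rw [show 2 * (2 * K) ^ 2 = 8 * K ^ 2 by ring]; push_cast; ring

noncomputable def fejerWeight (t : ℝ) : ℝ := 2 * ∫ x in (0 : ℝ)..1, (1 - x) * cos (t * x)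

lemma fejerWeight_eq {t : ℝ} (ht : t ≠ 0) : fejerWeight t = 2 * (1 - cos t) / t ^ 2 := by
  have hderiv : ∀ x ∈ Set.uIcc (0 : ℝ) 1,
      HasDerivAt (fun y => (1 - y) * sin (t * y) / t - cos (t * y) / t ^ 2)
        ((1 - x) * cos (t * x)) x := by
    intro x _
    have hlin : HasDerivAt (fun y : ℝ => t * y) t x := by
      simpa using (hasDerivAt_id x).const_mul t
    have := (((hasDerivAt_id x).const_sub 1).mul ((hasDerivAt_sin _).comp x hlin)).div_const t
      |>.sub (((hasDerivAt_cos _).comp x hlin).div_const (t ^ 2))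
    refine this.congr_deriv ?_
    simp only [Function.comp_apply, id]
    field_simp
    ring
  rw [fejerWeight, intervalIntegral.integral_eq_sub_of_hasDerivAt hderiv
    (by apply Continuous.intervalIntegrable; fun_prop)]
  simp only [mul_one, mul_zero, sub_self, sin_zero, cos_zero, sub_zero, zero_mul, zero_div]
  field_simp
  ring

lemma fejerWeight_nonneg (t : ℝ) : 0 ≤ fejerWeight t := by
  rcases eq_or_ne t 0 with rfl | ht
  · refine mul_nonneg zero_le_two (intervalIntegral.integral_nonneg zero_le_one fun x hx => ?_)
    simp only [zero_mul, cos_zero, mul_one, sub_nonneg]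
    exact hx.2
  · rw [fejerWeight_eq ht]
    have := cos_le_one t
    positivity

lemma cos_one_le_fejerWeight {t : ℝ} (ht : |t| ≤ 1) : cos 1 ≤ fejerWeight t := by
  have hmono : ∫ x in (0 : ℝ)..1, (1 - x) * cos 1 ≤ ∫ x in (0 : ℝ)..1, (1 - x) * cos (t * x) := by
    refine intervalIntegral.integral_mono_on zero_le_one
      (by apply Continuous.intervalIntegrable; fun_prop)
      (by apply Continuous.intervalIntegrable; fun_prop) fun x hx => ?_
    have htx : |t * x| ≤ 1 := by
      rw [abs_mul, abs_of_nonneg hx.1]; nlinarith [abs_nonneg t, hx.2]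
    refine mul_le_mul_of_nonneg_left ?_ (by linarith [hx.2])
    rw [← cos_abs (t * x)]
    exact cos_le_cos_of_nonneg_of_le_pi (abs_nonneg _) (by linarith [pi_gt_three]) htx
  have heval : ∫ x in (0 : ℝ)..1, (1 - x) * cos 1 = cos 1 / 2 := by
    rw [intervalIntegral.integral_mul_const,
      intervalIntegral.integral_sub intervalIntegrable_const intervalIntegral.intervalIntegrable_id]
    simp
    ring
  rw [fejerWeight]
  linarith

lemma cos_one_mul_card_filter_le {α : Type*} (B : Finset α) (q : α → ℝ) :
    cos 1 * #{m ∈ B | |q m| ≤ 1}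
      ≤ 2 * ∫ x in (0 : ℝ)..1, (1 - x) * ∑ m ∈ B, cos (q m * x) := by
  calc cos 1 * #{m ∈ B | |q m| ≤ 1} = ∑ m ∈ B with |q m| ≤ 1, cos 1 := by
        rw [sum_const, nsmul_eq_mul, mul_comm]
    _ ≤ ∑ m ∈ B with |q m| ≤ 1, fejerWeight (q m) :=
        sum_le_sum fun m hm => cos_one_le_fejerWeight (mem_filter.1 hm).2
    _ ≤ ∑ m ∈ B, fejerWeight (q m) :=
        sum_le_sum_of_subset_of_nonneg (filter_subset _ _) fun m _ _ => fejerWeight_nonneg _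
    _ = 2 * ∫ x in (0 : ℝ)..1, (1 - x) * ∑ m ∈ B, cos (q m * x) := by
        simp only [fejerWeight, ← mul_sum]
        rw [← intervalIntegral.integral_finsetSum fun m _ => by
          apply Continuous.intervalIntegrable; fun_prop]
        simp only [mul_sum]

lemma integral_cos_mul_le (v : ℝ) : ∫ x in (0 : ℝ)..1, cos (v * x) ≤ 2 / (1 + |v|) := by
  rcases eq_or_ne v 0 with rfl | hv
  · simp
  have hint : ∫ x in (0 : ℝ)..1, cos (v * x) = sin v / v := by
    rw [intervalIntegral.integral_comp_mul_left (fun x => cos x) hv, integral_cos]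
    simp [div_eq_inv_mul]
  rw [hint, le_div_iff₀ (by positivity)]
  have hv' : 0 < |v| := abs_pos.2 hv
  have h₁ : |sin v / v| ≤ 1 := by
    rw [abs_div, div_le_one hv']; exact abs_sin_le_abs
  have h₂ : |sin v / v| * |v| ≤ 1 := by
    rw [abs_div, div_mul_cancel₀ _ hv'.ne']; exact abs_sin_le_one v
  nlinarith [le_abs_self (sin v / v)]

lemma inv_one_add_abs_mul_le {θ : ℝ} (hθ : 0 < θ) (k : ℝ) :
    (1 + |θ * k|)⁻¹ ≤ (1 + θ⁻¹) * (1 + |k|)⁻¹ := by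
  rw [abs_mul, abs_of_pos hθ, ← div_eq_mul_inv, inv_eq_one_div,
    div_le_div_iff₀ (by positivity) (by positivity)]
  have : θ⁻¹ * θ = 1 := inv_mul_cancel₀ hθ.ne'
  nlinarith [abs_nonneg k, inv_pos.2 hθ]

lemma norm_sum_exp_mul_I_sq {ι : Type*} (s : Finset ι) (u : ι → ℝ) :
    ‖∑ i ∈ s, Complex.exp (u i * Complex.I)‖ ^ 2 = ∑ i ∈ s, ∑ j ∈ s, cos (u i - u j) := by
  set S := ∑ i ∈ s, Complex.exp (u i * Complex.I)
  have h : S * (starRingEnd ℂ) S = ∑ i ∈ s, ∑ j ∈ s, Complex.exp (↑(u i - u j) * Complex.I) := by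
    rw [map_sum, sum_mul_sum]
    refine sum_congr rfl fun i _ => sum_congr rfl fun j _ => ?_
    rw [← Complex.exp_conj, ← Complex.exp_add]
    simp only [map_mul, Complex.conj_ofReal, Complex.conj_I]
    push_cast
    ring_nf
  rw [Complex.sq_norm, ← Complex.ofReal_re (Complex.normSq _), ← Complex.mul_conj, h,
    Complex.re_sum]
  simp only [Complex.re_sum, Complex.exp_ofReal_mul_I_re]

noncomputable def quadExpSum (θ : ℝ) (K : ℕ) (x : ℝ) : ℂ :=
  ∑ n ∈ symmIcc K, Complex.exp (↑(θ * (n : ℝ) ^ 2 * x) * Complex.I)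

@[fun_prop]
lemma continuous_quadExpSum (θ : ℝ) (K : ℕ) : Continuous (quadExpSum θ K) := by
  unfold quadExpSum; fun_prop

lemma norm_quadExpSum_le (θ : ℝ) (K : ℕ) (x : ℝ) : ‖quadExpSum θ K x‖ ≤ 2 * K + 1 := by
  calc ‖quadExpSum θ K x‖ ≤ ∑ n ∈ symmIcc K, ‖Complex.exp (↑(θ * (n : ℝ) ^ 2 * x) * Complex.I)‖ :=
        norm_sum_le _ _
    _ = 2 * K + 1 := by
        simp only [Complex.norm_exp_ofReal_mul_I, sum_const, card_symmIcc, nsmul_eq_mul, mul_one]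
        push_cast; ring

lemma quadExpSum_sq (θ : ℝ) (K : ℕ) (x : ℝ) : quadExpSum θ K x ^ 2
    = ∑ p ∈ symmIcc K ×ˢ symmIcc K,
        Complex.exp (↑(θ * ((p.1 : ℝ) ^ 2 + (p.2 : ℝ) ^ 2) * x) * Complex.I) := by
  rw [quadExpSum, sq, sum_mul_sum, sum_product]
  refine sum_congr rfl fun m _ => sum_congr rfl fun n _ => ?_
  rw [← Complex.exp_add]
  push_cast
  ring_nf

lemma norm_quadExpSum_pow_four (θ : ℝ) (K : ℕ) (x : ℝ) : ‖quadExpSum θ K x‖ ^ 4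
    = ∑ p ∈ symmIcc K ×ˢ symmIcc K, ∑ q ∈ symmIcc K ×ˢ symmIcc K,
      cos (θ * ((p.1 ^ 2 + p.2 ^ 2 - (q.1 ^ 2 + q.2 ^ 2) : ℤ) : ℝ) * x) := by
  rw [show 4 = 2 * 2 by rfl, pow_mul, ← norm_pow, quadExpSum_sq, norm_sum_exp_mul_I_sq]
  refine sum_congr rfl fun p _ => sum_congr rfl fun q _ => ?_
  push_cast
  ring_nf

lemma integral_norm_quadExpSum_pow_four_le {θ : ℝ} (hθ : 0 < θ) (K : ℕ) :
    ∫ x in (0 : ℝ)..1, ‖quadExpSum θ K x‖ ^ 4 ≤ 2 * (1 + θ⁻¹) *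
      ∑ p ∈ symmIcc K ×ˢ symmIcc K, ∑ q ∈ symmIcc K ×ˢ symmIcc K,
        (1 + |((p.1 ^ 2 + p.2 ^ 2 - (q.1 ^ 2 + q.2 ^ 2) : ℤ) : ℝ)|)⁻¹ := by
  simp_rw [norm_quadExpSum_pow_four]
  rw [intervalIntegral.integral_finsetSum fun p _ => by
    apply Continuous.intervalIntegrable; fun_prop, mul_sum]
  refine sum_le_sum fun p _ => ?_
  rw [intervalIntegral.integral_finsetSum fun q _ => by
    apply Continuous.intervalIntegrable; fun_prop, mul_sum]
  refine sum_le_sum fun q _ => (integral_cos_mul_le _).trans ?_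
  rw [div_eq_mul_inv, mul_assoc]
  exact mul_le_mul_of_nonneg_left (inv_one_add_abs_mul_le hθ _) zero_le_two

theorem exists_integral_norm_quadExpSum_pow_four_le {ε : ℝ} (hε : 0 < ε) :
    ∃ A > 0, ∀ θ > 0, ∀ K : ℕ, 1 ≤ K → ∀ N : ℝ, (K : ℝ) ≤ N →
      ∫ x in (0 : ℝ)..1, ‖quadExpSum θ K x‖ ^ 4 ≤ (1 + θ⁻¹) * A * N ^ (2 + ε) := by
  set δ := ε / 6
  have hδ : 0 < δ := by positivity
  refine ⟨384 * (2 + δ⁻¹) ^ 3 * 8 ^ (ε / 2), by positivity, fun θ hθ K hK N hKN => ?_⟩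
  have hK' : (1 : ℝ) ≤ K := by exact_mod_cast hK
  have hN : 1 ≤ N := hK'.trans hKN
  set X := 8 * N ^ 2
  have h₁ : 1 + (harmonic (2 * K) : ℝ) ≤ (2 + δ⁻¹) * X ^ δ :=
    one_add_harmonic_le_mul_rpow hδ (by omega) (by push_cast; nlinarith)
  have h₂ : 1 + 2 * (harmonic (8 * K ^ 2) : ℝ) ≤ 2 * ((2 + δ⁻¹) * X ^ δ) := by
    have := one_add_harmonic_le_mul_rpow hδ (n := 8 * K ^ 2) (by nlinarith) (X := X)
      (by push_cast; nlinarith)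
    linarith [harmonic_cast_nonneg (8 * K ^ 2)]
  have hX : (X ^ δ) ^ 3 = 8 ^ (ε / 2) * N ^ ε := by
    rw [← rpow_natCast, ← rpow_mul (by positivity), mul_rpow (by norm_num) (by positivity),
      ← rpow_natCast N 2, ← rpow_mul (by positivity)]
    norm_num [δ]
    ring_nf
  calc ∫ x in (0 : ℝ)..1, ‖quadExpSum θ K x‖ ^ 4
      ≤ 2 * (1 + θ⁻¹) * (96 * (K : ℝ) ^ 2 * (1 + harmonic (2 * K) : ℝ) ^ 2
        * (1 + 2 * harmonic (8 * K ^ 2) : ℝ)) :=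
        (integral_norm_quadExpSum_pow_four_le hθ K).trans
          (mul_le_mul_of_nonneg_left (sum_inv_one_add_abs_sq_sub_le K hK) (by positivity))
    _ ≤ 2 * (1 + θ⁻¹) * (96 * N ^ 2 * ((2 + δ⁻¹) * X ^ δ) ^ 2 * (2 * ((2 + δ⁻¹) * X ^ δ))) := by
        have := harmonic_cast_nonneg (2 * K)
        have := harmonic_cast_nonneg (8 * K ^ 2)
        gcongr
    _ = (1 + θ⁻¹) * (384 * (2 + δ⁻¹) ^ 3 * 8 ^ (ε / 2)) * (N ^ (2 : ℝ) * N ^ ε) := by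
        rw [rpow_two]; linear_combination (384 * (1 + θ⁻¹) * (2 + δ⁻¹) ^ 3 * N ^ 2) * hX
    _ = (1 + θ⁻¹) * (384 * (2 + δ⁻¹) ^ 3 * 8 ^ (ε / 2)) * N ^ (2 + ε) := by
        rw [← rpow_add (by positivity)]

lemma integral_pow_le_of_four_le {g : ℝ → ℝ} (hg : Continuous g) (hg0 : ∀ x, 0 ≤ g x) {B : ℝ}
    (hgB : ∀ x, g x ≤ B) {d : ℕ} (hd : 4 ≤ d) :
    ∫ x in (0 : ℝ)..1, g x ^ d ≤ B ^ (d - 4) * ∫ x in (0 : ℝ)..1, g x ^ 4 := by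
  rw [← intervalIntegral.integral_const_mul]
  refine intervalIntegral.integral_mono_on zero_le_one
    (by apply Continuous.intervalIntegrable; fun_prop)
    (by apply Continuous.intervalIntegrable; fun_prop) fun x _ => ?_
  rw [← Nat.sub_add_cancel hd, pow_add, Nat.add_sub_cancel]
  gcongr
  exacts [hg0 x, hgB x]

lemma integral_pow_three_le {g : ℝ → ℝ} (hg : Continuous g) (hg0 : ∀ x, 0 ≤ g x) {t : ℝ}
    (ht : 0 < t) : ∫ x in (0 : ℝ)..1, g x ^ 3 ≤ (∫ x in (0 : ℝ)..1, g x ^ 4) / t + t ^ 3 := by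
  have hpt : ∀ a, 0 ≤ a → a ^ 3 ≤ a ^ 4 / t + t ^ 3 := by
    intro a ha
    rcases le_total a t with h | h
    · have : 0 ≤ a ^ 4 / t := by positivity
      nlinarith [pow_le_pow_left₀ ha h 3]
    · have : a ^ 3 ≤ a ^ 4 / t := by
        rw [le_div_iff₀ ht]
        calc a ^ 3 * t ≤ a ^ 3 * a := by gcongr
          _ = a ^ 4 := by ring
      linarith [pow_nonneg ht.le 3]
  calc ∫ x in (0 : ℝ)..1, g x ^ 3 ≤ ∫ x in (0 : ℝ)..1, (g x ^ 4 / t + t ^ 3) :=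
        intervalIntegral.integral_mono_on zero_le_one
          (by apply Continuous.intervalIntegrable; fun_prop)
          (by apply Continuous.intervalIntegrable; fun_prop) fun x _ => hpt _ (hg0 x)
    _ = (∫ x in (0 : ℝ)..1, g x ^ 4) / t + t ^ 3 := by
        rw [intervalIntegral.integral_add (by apply Continuous.intervalIntegrable; fun_prop)
          intervalIntegrable_const, intervalIntegral.integral_div]
        simp

lemma integral_pow_three_le_of_integral_pow_four_le {g : ℝ → ℝ} (hg : Continuous g)
    (hg0 : ∀ x, 0 ≤ g x) {N A ε : ℝ} (hN : 1 ≤ N) (hε : 0 ≤ ε)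
    (h4 : ∫ x in (0 : ℝ)..1, g x ^ 4 ≤ A * N ^ (2 + ε)) :
    ∫ x in (0 : ℝ)..1, g x ^ 3 ≤ (A + 1) * N ^ (3 / 2 + ε : ℝ) := by
  have hN0 : 0 < N := by linarith
  set t := N ^ (1 / 2 : ℝ)
  have ht3 : t ^ 3 = N ^ (3 / 2 : ℝ) := by
    rw [← rpow_natCast, ← rpow_mul hN0.le]; norm_num
  have hdiv : A * N ^ (2 + ε) / t = A * N ^ (3 / 2 + ε : ℝ) := by
    rw [mul_div_assoc, ← rpow_sub hN0]; ring_nf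
  have hle : N ^ (3 / 2 : ℝ) ≤ N ^ (3 / 2 + ε : ℝ) := rpow_le_rpow_of_exponent_le hN (by linarith)
  calc ∫ x in (0 : ℝ)..1, g x ^ 3 ≤ (∫ x in (0 : ℝ)..1, g x ^ 4) / t + t ^ 3 :=
        integral_pow_three_le hg hg0 (by positivity)
    _ ≤ A * N ^ (3 / 2 + ε : ℝ) + N ^ (3 / 2 + ε : ℝ) := by
        rw [← hdiv, ht3]; gcongr
    _ = (A + 1) * N ^ (3 / 2 + ε : ℝ) := by ring

lemma integral_pow_le_of_integral_pow_four_le {g : ℝ → ℝ} (hg : Continuous g)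
    (hg0 : ∀ x, 0 ≤ g x) {N A ε : ℝ} (hN : 1 ≤ N) (hA : 0 ≤ A) (hε : 0 ≤ ε)
    (hgN : ∀ x, g x ≤ 3 * N) (h4 : ∫ x in (0 : ℝ)..1, g x ^ 4 ≤ A * N ^ (2 + ε))
    {d : ℕ} (hd : 3 ≤ d) :
    ∫ x in (0 : ℝ)..1, g x ^ d ≤ 3 ^ d * (A + 1) * N ^ ((d : ℝ) - 2 * d / (d + 1) + ε) := by
  rcases hd.eq_or_lt with rfl | hd4
  · have hexp : ((3 : ℕ) : ℝ) - 2 * (3 : ℕ) / ((3 : ℕ) + 1) + ε = 3 / 2 + ε := by norm_num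
    rw [hexp]
    refine (integral_pow_three_le_of_integral_pow_four_le hg hg0 hN hε h4).trans ?_
    have : 0 ≤ (A + 1) * N ^ (3 / 2 + ε : ℝ) := by positivity
    nlinarith
  have hd4 : 4 ≤ d := hd4
  have hexp : ((d - 4 : ℕ) : ℝ) + (2 + ε) ≤ (d : ℝ) - 2 * d / (d + 1) + ε := by
    rw [Nat.cast_sub hd4, Nat.cast_ofNat]
    have : 2 * (d : ℝ) / (d + 1) ≤ 2 := by
      rw [div_le_iff₀ (by positivity)]; linarith
    linarith
  calc ∫ x in (0 : ℝ)..1, g x ^ d ≤ (3 * N) ^ (d - 4) * (A * N ^ (2 + ε)) :=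
        (integral_pow_le_of_four_le hg hg0 hgN hd4).trans
          (mul_le_mul_of_nonneg_left h4 (by positivity))
    _ = 3 ^ (d - 4) * A * N ^ (((d - 4 : ℕ) : ℝ) + (2 + ε)) := by
        rw [rpow_add (by positivity) ((d - 4 : ℕ) : ℝ), rpow_natCast, mul_pow]; ring
    _ ≤ 3 ^ d * (A + 1) * N ^ ((d : ℝ) - 2 * d / (d + 1) + ε) := by
        gcongr
        · norm_num
        · omega
        · linarith

theorem exists_integral_norm_quadExpSum_pow_le {d : ℕ} (hd : 3 ≤ d) {ε : ℝ} (hε : 0 < ε)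
    {θmin : ℝ} (hθmin : 0 < θmin) :
    ∃ B > 0, ∀ θ, θmin ≤ θ → ∀ N : ℝ, 1 ≤ N →
      ∫ x in (0 : ℝ)..1, ‖quadExpSum θ ⌊N⌋₊ x‖ ^ d ≤ B * N ^ ((d : ℝ) - 2 * d / (d + 1) + ε) := by
  obtain ⟨A, hA, hA4⟩ := exists_integral_norm_quadExpSum_pow_four_le hε
  refine ⟨3 ^ d * ((1 + θmin⁻¹) * A + 1), by positivity, fun θ hθ N hN => ?_⟩
  have hK : 1 ≤ ⌊N⌋₊ := Nat.le_floor (by simpa using hN)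
  have hKN : (⌊N⌋₊ : ℝ) ≤ N := Nat.floor_le (by linarith)
  refine integral_pow_le_of_integral_pow_four_le (continuous_quadExpSum _ _).norm
    (fun _ => norm_nonneg _) hN (by positivity) hε.le
    (fun x => (norm_quadExpSum_le _ _ x).trans (by linarith)) ?_ hd
  refine (hA4 θ (hθmin.trans_le hθ) _ hK N hKN).trans ?_
  gcongr

lemma sum_piFinset_cos_le_prod_norm {ι α : Type*} [Fintype ι] [DecidableEq ι]
    (t : ι → Finset α) (f : ι → α → ℝ) (c : ℝ) :
    ∑ m ∈ Fintype.piFinset t, cos (∑ j, f j (m j) - c)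
      ≤ ∏ j, ‖∑ n ∈ t j, Complex.exp (f j n * Complex.I)‖ := by
  have h : ∑ m ∈ Fintype.piFinset t, Complex.exp (↑(∑ j, f j (m j) - c) * Complex.I)
      = Complex.exp (↑(-c) * Complex.I) * ∏ j, ∑ n ∈ t j, Complex.exp (f j n * Complex.I) := by
    rw [prod_univ_sum, mul_sum]
    refine sum_congr rfl fun m _ => ?_
    rw [Complex.ofReal_sub, Complex.ofReal_sum, sub_mul, sum_mul, ← Complex.exp_sum,
      ← Complex.exp_add]
    congr 1
    push_cast
    ring
  calc ∑ m ∈ Fintype.piFinset t, cos (∑ j, f j (m j) - c)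
      = (∑ m ∈ Fintype.piFinset t, Complex.exp (↑(∑ j, f j (m j) - c) * Complex.I)).re := by
        simp only [Complex.re_sum, Complex.exp_ofReal_mul_I_re]
    _ ≤ ‖∑ m ∈ Fintype.piFinset t, Complex.exp (↑(∑ j, f j (m j) - c) * Complex.I)‖ :=
        Complex.re_le_norm _
    _ = ∏ j, ‖∑ n ∈ t j, Complex.exp (f j n * Complex.I)‖ := by
        rw [h, norm_mul, Complex.norm_exp_ofReal_mul_I, one_mul, norm_prod]

lemma prod_le_sum_pow_card {ι : Type*} [Fintype ι] [Nonempty ι] {a : ι → ℝ} (ha : ∀ j, 0 ≤ a j) :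
    ∏ j, a j ≤ ∑ j, a j ^ Fintype.card ι := by
  obtain ⟨j₀, -, hj₀⟩ := exists_max_image univ a univ_nonempty
  calc ∏ j, a j ≤ ∏ _j, a j₀ := prod_le_prod (fun j _ => ha j) fun j _ => hj₀ j (mem_univ j)
    _ = a j₀ ^ Fintype.card ι := by rw [prod_const, card_univ]
    _ ≤ ∑ j, a j ^ Fintype.card ι :=
        single_le_sum (fun j _ => pow_nonneg (ha j) _) (mem_univ j₀)

lemma cos_one_mul_card_le_sum_integral {ι : Type*} [Fintype ι] [DecidableEq ι] [Nonempty ι]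
    (θ : ι → ℝ) (K : ℕ) (ℓ : ℝ) :
    cos 1 * #{m ∈ Fintype.piFinset fun _ => symmIcc K | |∑ j, θ j * (m j : ℝ) ^ 2 - ℓ| ≤ 1}
      ≤ 2 * ∑ j, ∫ x in (0 : ℝ)..1, ‖quadExpSum (θ j) K x‖ ^ Fintype.card ι := by
  refine (cos_one_mul_card_filter_le _ _).trans ?_
  rw [← intervalIntegral.integral_finsetSum fun j _ => by
    apply Continuous.intervalIntegrable; fun_prop]
  gcongr
  refine intervalIntegral.integral_mono_on zero_le_one
    (by apply Continuous.intervalIntegrable; fun_prop)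
    (by apply Continuous.intervalIntegrable; fun_prop) fun x hx => ?_
  have hcos := sum_piFinset_cos_le_prod_norm (fun _ => symmIcc K)
    (fun j n => θ j * (n : ℝ) ^ 2 * x) (ℓ * x)
  have hprod : 0 ≤ ∏ j, ‖quadExpSum (θ j) K x‖ := prod_nonneg fun j _ => norm_nonneg _
  calc (1 - x) * ∑ m ∈ Fintype.piFinset fun _ => symmIcc K,
        cos ((∑ j, θ j * (m j : ℝ) ^ 2 - ℓ) * x)
      ≤ (1 - x) * ∏ j, ‖quadExpSum (θ j) K x‖ := by
        refine mul_le_mul_of_nonneg_left (le_of_eq_of_le (sum_congr rfl fun m _ => ?_) hcos)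
          (by linarith [hx.2])
        rw [sub_mul, sum_mul]
    _ ≤ ∏ j, ‖quadExpSum (θ j) K x‖ := by nlinarith [hx.1]
    _ ≤ ∑ j, ‖quadExpSum (θ j) K x‖ ^ Fintype.card ι := prod_le_sum_pow_card fun j => norm_nonneg _

lemma abs_intCast_le_iff_mem_symmIcc {N : ℝ} (hN : 0 ≤ N) (z : ℤ) :
    |(z : ℝ)| ≤ N ↔ z ∈ symmIcc ⌊N⌋₊ := by
  rw [← Int.cast_abs, ← Nat.cast_natAbs, ← Nat.le_floor_iff hN, mem_Icc]
  omega

lemma setOf_forall_abs_le_and_eq {ι : Type*} [Fintype ι] [DecidableEq ι] {N : ℝ} (hN : 0 ≤ N)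
    (P : (ι → ℤ) → Prop) [DecidablePred P] :
    {m : ι → ℤ | (∀ j, |(m j : ℝ)| ≤ N) ∧ P m}
      = ↑{m ∈ Fintype.piFinset fun _ : ι => symmIcc ⌊N⌋₊ | P m} := by
  ext m
  simp only [Set.mem_ofPred_eq, coe_filter, Fintype.mem_piFinset, abs_intCast_le_iff_mem_symmIcc hN]

theorem lattice_count_annulus_odd_general (d : ℕ) (hd3 : 3 ≤ d) (ε : ℝ) (hε : 0 < ε)
    (θmin θmax : ℝ) (hθmin : 0 < θmin) :
    ∃ C : ℝ, 0 < C ∧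
      ∀ (θ : Fin d → ℝ), (∀ j, θmin ≤ θ j ∧ θ j ≤ θmax) →
      ∀ (N : ℝ), 1 ≤ N → ∀ (ℓ : ℝ),
      (Set.ncard {m : Fin d → ℤ |
          (∀ j, |(m j : ℝ)| ≤ N) ∧ |(∑ j, θ j * (m j : ℝ) ^ 2) - ℓ| ≤ 1} : ℝ)
        ≤ C * N ^ ((d : ℝ) - 2 * d / (d + 1) + ε) := by
  classical
  have : NeZero d := ⟨by omega⟩
  obtain ⟨B, hB, hmoment⟩ := exists_integral_norm_quadExpSum_pow_le hd3 hε hθmin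
  refine ⟨2 * d * B / cos 1, div_pos (by positivity) cos_one_pos, fun θ hθ N hN ℓ => ?_⟩
  have hcount := cos_one_mul_card_le_sum_integral θ ⌊N⌋₊ ℓ
  rw [Fintype.card_fin] at hcount
  rw [setOf_forall_abs_le_and_eq (by linarith), Set.ncard_coe_finset]
  calc _ ≤ (2 * ∑ j, ∫ x in (0 : ℝ)..1, ‖quadExpSum (θ j) ⌊N⌋₊ x‖ ^ d) / cos 1 := by
        rw [le_div_iff₀ cos_one_pos]; linarith
    _ ≤ (2 * ∑ _j : Fin d, B * N ^ ((d : ℝ) - 2 * d / (d + 1) + ε)) / cos 1 := by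
        gcongr with j
        exacts [cos_one_pos.le, hmoment _ (hθ j).1 N hN]
    _ = 2 * d * B / cos 1 * N ^ ((d : ℝ) - 2 * d / (d + 1) + ε) := by
        rw [sum_const, card_univ, Fintype.card_fin, nsmul_eq_mul]; ring

/-- Lemma 3, odd case: the number of lattice points `m ∈ [-N, N]^d` with `|Q(m) - ℓ| ≤ 1`,
where `Q(m) = Σ θ_j m_j²`, is at most `C N^{d - 2d/(d+1) + ε}` for odd `d ≥ 3`. -/
theorem lattice_count_annulus_odd (d : ℕ) (hd3 : 3 ≤ d) (hodd : Odd d) (ε : ℝ) (hε : 0 < ε)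
    (θmin θmax : ℝ) (hθmin : 0 < θmin) (hminmax : θmin ≤ θmax) :
    ∃ C : ℝ, 0 < C ∧
      ∀ (θ : Fin d → ℝ), (∀ j, θmin ≤ θ j ∧ θ j ≤ θmax) →
      ∀ (N : ℝ), 1 ≤ N → ∀ (ℓ : ℝ),
      (Set.ncard {m : Fin d → ℤ |
          (∀ j, |(m j : ℝ)| ≤ N) ∧ |(∑ j, θ j * (m j : ℝ) ^ 2) - ℓ| ≤ 1} : ℝ)
        ≤ C * N ^ ((d : ℝ) - 2 * d / (d + 1) + ε) :=
  lattice_count_annulus_odd_general d hd3 ε hε θmin θmax hθmin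
end

section
/- (Lemma 3, even case: lattice point count in an ellipsoidal annulus.) For every even integer d ≥ 4 and every ε > 0 there exists a constant C, depending only on d, ε, θ_min and θ_max, such that for every real N ≥ 1 and every ℓ ∈ ℝ, the number of points m ∈ ℤ^d with |m_j| ≤ N for all j and |Q(m) − ℓ| ≤ 1 is at most C · N^{d − 2 + ε}. -/
/-!
Split `m = (x, y) ∈ ℤ² × ℤ^(d-2)`. Grouping `x` and `y` by `⌊Q x⌋` and `⌊Q y⌋`, the count becomes
a sum of four convolutions, and Cauchy–Schwarz bounds it by `4 √(E₂ E_{d-2})`, where `E_k` counts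
the pairs `(x, x')` in the `k`-dimensional box with `|Q x - Q x'| ≤ 1`.

Peeling off one coordinate at a time gives `E_k ≤ k W (3N)^(2k-2) + (6N)^k`. With the other
coordinates fixed, a pair `(a, b)` with `a² ≠ b²` has `a² - b²` in a window of `2 / θ_min + 1`
integers `v`, each with at most `2 τ(|v|) ≪ N^ε` representations `v = (a - b)(a + b)`; this is
`W`. The pairs with `a² = b²` number at most `2 (2N + 1)` and leave an energy pair of one
dimension less. For `k ≥ 2` this is `O(N^(2k-2+ε))`, and `√(N^(2+ε) N^(2d-6+ε)) = N^(d-2+ε)`.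
-/

open Finset

theorem succ_le_mul_pow {r : ℝ} (hr : 1 < r) (a : ℕ) : (a + 1 : ℝ) ≤ (1 + (r - 1)⁻¹) * r ^ a := by
  have hr' : 0 < r - 1 := sub_pos.2 hr
  have bernoulli : 1 + a * (r - 1) ≤ r ^ a := by
    simpa using one_add_mul_le_pow (a := r - 1) (by linarith) a
  calc (a + 1 : ℝ) ≤ (1 + (r - 1)⁻¹) * (1 + a * (r - 1)) := by
        field_simp
        nlinarith [mul_nonneg (mul_nonneg (Nat.cast_nonneg a : (0:ℝ) ≤ a) hr'.le) hr'.le]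
    _ ≤ (1 + (r - 1)⁻¹) * r ^ a := by gcongr

theorem exists_card_divisors_le_mul_rpow {δ : ℝ} (hδ : 0 < δ) :
    ∃ C : ℝ, 0 ≤ C ∧ ∀ n : ℕ, n ≠ 0 → (#n.divisors : ℝ) ≤ C * (n : ℝ) ^ δ := by
  set K := 1 + ((2 : ℝ) ^ δ - 1)⁻¹
  have h2δ : 1 < (2 : ℝ) ^ δ := Real.one_lt_rpow one_lt_two hδ
  have hK : 1 ≤ K := le_add_of_nonneg_right (inv_nonneg.2 (by linarith))
  set T : ℕ := ⌈(2 : ℝ) ^ δ⁻¹⌉₊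
  -- small primes lose a factor `K`, primes `p ≥ 2 ^ (1 / δ)` have `p ^ δ ≥ 2`
  have factor : ∀ p a : ℕ, p.Prime →
      (a + 1 : ℝ) ≤ (if p < T then K else 1) * ((p : ℝ) ^ δ) ^ a := by
    intro p a hp
    have hp2 : (2 : ℝ) ≤ p := by exact_mod_cast hp.two_le
    split_ifs with hpT
    · calc (a + 1 : ℝ) ≤ K * ((2 : ℝ) ^ δ) ^ a := succ_le_mul_pow h2δ a
        _ ≤ K * ((p : ℝ) ^ δ) ^ a := by gcongr
    · have h2 : (2 : ℝ) ≤ (p : ℝ) ^ δ := by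
        calc (2 : ℝ) = ((2 : ℝ) ^ δ⁻¹) ^ δ := by
              rw [← Real.rpow_mul zero_le_two, inv_mul_cancel₀ hδ.ne', Real.rpow_one]
          _ ≤ (p : ℝ) ^ δ := by
              gcongr
              exact (Nat.le_ceil _).trans (by exact_mod_cast not_lt.1 hpT)
      calc (a + 1 : ℝ) ≤ 2 ^ a := by exact_mod_cast Nat.lt_two_pow_self
        _ ≤ 1 * ((p : ℝ) ^ δ) ^ a := by rw [one_mul]; gcongr
  refine ⟨K ^ T, by positivity, fun n hn => ?_⟩
  have hprod : (n : ℝ) ^ δ = ∏ p ∈ n.primeFactors, ((p : ℝ) ^ δ) ^ n.factorization p := by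
    conv_lhs => rw [← Nat.prod_factorization_pow_eq_self hn]
    rw [Nat.prod_factorization_eq_prod_primeFactors, Nat.cast_prod,
      ← Real.finsetProd_rpow _ _ (fun p _ => by positivity)]
    refine prod_congr rfl fun p _ => ?_
    rw [Nat.cast_pow, Real.rpow_pow_comm (Nat.cast_nonneg p)]
  have hsmall : ∏ p ∈ n.primeFactors, (if p < T then K else 1) ≤ K ^ T := by
    rw [prod_ite, prod_const, prod_const_one, mul_one]
    refine pow_le_pow_right₀ hK ((card_le_card fun p hp => ?_).trans (card_range T).le)
    exact mem_range.2 (mem_filter.1 hp).2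
  calc (#n.divisors : ℝ) = ∏ p ∈ n.primeFactors, ((n.factorization p : ℝ) + 1) := by
        rw [Nat.card_divisors hn]; push_cast; rfl
    _ ≤ ∏ p ∈ n.primeFactors, ((if p < T then K else 1) * ((p : ℝ) ^ δ) ^ n.factorization p) :=
        prod_le_prod (fun _ _ => by positivity)
          (fun p hp => factor p _ (Nat.prime_of_mem_primeFactors hp))
    _ ≤ K ^ T * (n : ℝ) ^ δ := by
        rw [prod_mul_distrib, hprod]
        gcongr

theorem card_filter_sq_sub_sq_eq_le (S : Finset (ℤ × ℤ)) {v : ℤ} (hv : v ≠ 0) :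
    #{p ∈ S | p.1 ^ 2 - p.2 ^ 2 = v} ≤ 2 * #v.natAbs.divisors := by
  -- `p ↦ p.1 - p.2` is injective on the fibre and lands in the signed divisors of `v`
  have hfac : ∀ p : ℤ × ℤ, p.1 ^ 2 - p.2 ^ 2 = v → (p.1 - p.2) * (p.1 + p.2) = v := fun p hp => by
    rw [← hp]; ring
  have hsigned : #(v.natAbs.divisors.image (fun t : ℕ => (t : ℤ)) ∪
      v.natAbs.divisors.image (fun t : ℕ => -(t : ℤ))) ≤ 2 * #v.natAbs.divisors := by
    grw [card_union_le, card_image_le, card_image_le, two_mul]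
  refine (card_le_card_of_injOn (fun p => p.1 - p.2) (fun p hp => ?_) fun p hp q hq hpq => ?_).trans
    hsigned
  · have hp := hfac p (mem_filter.1 hp).2
    have hmem : (p.1 - p.2).natAbs ∈ v.natAbs.divisors :=
      Nat.mem_divisors.2 ⟨Int.natAbs_dvd_natAbs.2 ⟨_, hp.symm⟩, Int.natAbs_ne_zero.2 hv⟩
    rcases Int.natAbs_eq (p.1 - p.2) with h | h
    · exact mem_union_left _ (mem_image.2 ⟨_, hmem, h.symm⟩)
    · exact mem_union_right _ (mem_image.2 ⟨_, hmem, h.symm⟩)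
  · have hp' := hfac p (mem_filter.1 hp).2
    have hq' := hfac q (mem_filter.1 hq).2
    simp only at hpq
    have hne : p.1 - p.2 ≠ 0 := left_ne_zero_of_mul (hp'.symm ▸ hv)
    have hsum : p.1 + p.2 = q.1 + q.2 := mul_left_cancel₀ hne (by rw [hp', hpq, hq'])
    exact Prod.ext (by omega) (by omega)

theorem card_filter_sq_eq_sq_le (T : Finset ℤ) :
    #{p ∈ T ×ˢ T | p.1 ^ 2 = p.2 ^ 2} ≤ 2 * #T := by
  calc #{p ∈ T ×ˢ T | p.1 ^ 2 = p.2 ^ 2}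
      ≤ #(T.biUnion fun b => ({(b, b), (-b, b)} : Finset (ℤ × ℤ))) := by
        refine card_le_card fun p hp => ?_
        obtain ⟨⟨-, hp2⟩, hsq⟩ := by simpa only [mem_filter, mem_product] using hp
        refine mem_biUnion.2 ⟨p.2, hp2, ?_⟩
        rcases sq_eq_sq_iff_eq_or_eq_neg.1 hsq with h | h <;> simp [Prod.ext_iff, h]
    _ ≤ ∑ b ∈ T, #({(b, b), (-b, b)} : Finset (ℤ × ℤ)) := card_biUnion_le
    _ ≤ ∑ _b ∈ T, 2 := sum_le_sum fun _ _ => card_le_two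
    _ = 2 * #T := by rw [sum_const, smul_eq_mul, mul_comm]

theorem card_Icc_ceil_floor_le {lo hi : ℝ} (h : lo ≤ hi) :
    (#(Icc ⌈lo⌉ ⌊hi⌋) : ℝ) ≤ hi - lo + 1 := by
  have hcard : (#(Icc ⌈lo⌉ ⌊hi⌋) : ℤ) = max (⌊hi⌋ + 1 - ⌈lo⌉) 0 := by
    rw [Int.card_Icc, Int.toNat_eq_max]
  have hcard' : (#(Icc ⌈lo⌉ ⌊hi⌋) : ℝ) = max ((⌊hi⌋ : ℝ) + 1 - ⌈lo⌉) 0 := by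
    exact_mod_cast hcard
  rw [hcard']
  exact max_le (by linarith [Int.floor_le hi, Int.le_ceil lo]) (by linarith)

theorem card_Icc_neg_le {M : ℤ} {N : ℝ} (hMN : (M : ℝ) ≤ N) (hN : 1 ≤ N) :
    (#(Icc (-M) M) : ℝ) ≤ 3 * N := by
  have hcard : (#(Icc (-M) M) : ℤ) = max (2 * M + 1) 0 := by
    rw [Int.card_Icc, Int.toNat_eq_max]; ring_nf
  have hcard' : (#(Icc (-M) M) : ℝ) = max (2 * (M : ℝ) + 1) 0 := by exact_mod_cast hcard
  rw [hcard']
  exact max_le (by linarith) (by linarith)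

noncomputable def nearPairs {α : Type*} (S : Finset α) (F : α → ℝ) (s : ℝ) : Finset (α × α) :=
  {p ∈ S ×ˢ S | |F p.1 - F p.2 + s| ≤ 1}

theorem card_nearPairs_map {α β : Type*} (S : Finset α) (e : α ↪ β) (F : β → ℝ) (s : ℝ) :
    #(nearPairs (S.map e) F s) = #(nearPairs S (F ∘ e) s) := by
  rw [nearPairs, ← prodMap_map_product, filter_map, card_map]
  rfl

theorem card_nearPairs_prod_eq_sum {α β : Type*} (X : Finset α) (Y : Finset β)
    (F : α → ℝ) (G : β → ℝ) (s : ℝ) :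
    #(nearPairs (X ×ˢ Y) (fun p => F p.1 + G p.2) s)
      = ∑ q ∈ Y ×ˢ Y, #(nearPairs X F (G q.1 - G q.2 + s)) := by
  classical
  rw [card_eq_sum_card_fiberwise (f := fun p => (p.1.2, p.2.2)) (t := Y ×ˢ Y) fun p hp => by
    obtain ⟨⟨⟨-, hy⟩, ⟨-, hy'⟩⟩, -⟩ := by simpa [nearPairs] using hp
    exact mem_product.2 ⟨hy, hy'⟩]
  refine sum_congr rfl fun q hq => card_nbij' (fun p => (p.1.1, p.2.1))
    (fun x => ((x.1, q.1), (x.2, q.2))) ?_ ?_ ?_ (fun _ _ => rfl)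
  · rintro ⟨⟨x, y⟩, x', y'⟩ hp
    obtain ⟨⟨⟨⟨hx, -⟩, hx', -⟩, hnear⟩, rfl⟩ := by simpa [nearPairs] using hp
    simp only [nearPairs, coe_filter, mem_product, Set.mem_ofPred_eq]
    exact ⟨⟨hx, hx'⟩, by convert hnear using 2; ring⟩
  · rintro ⟨x, x'⟩ hx
    obtain ⟨⟨hx, hx'⟩, hnear⟩ := by simpa [nearPairs] using hx
    simp only [nearPairs, coe_filter, mem_filter, mem_product, Set.mem_ofPred_eq]
    obtain ⟨hy, hy'⟩ := mem_product.1 hq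
    exact ⟨⟨⟨⟨hx, hy⟩, hx', hy'⟩, by convert hnear using 2; ring⟩, trivial⟩
  · rintro ⟨⟨x, y⟩, x', y'⟩ hp
    obtain ⟨-, rfl⟩ := by simpa [nearPairs] using hp
    rfl

theorem card_nearPairs_prod_le {α β : Type*} (X : Finset α) (Y : Finset β) (F : α → ℝ) (G : β → ℝ)
    {W D : ℝ} (hX : ∀ c, (#(nearPairs X F c) : ℝ) ≤ W + if |c| ≤ 1 then D else 0) (s : ℝ) :
    (#(nearPairs (X ×ˢ Y) (fun p => F p.1 + G p.2) s) : ℝ)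
      ≤ #Y ^ 2 * W + D * #(nearPairs Y G s) := by
  rw [card_nearPairs_prod_eq_sum, Nat.cast_sum]
  calc _ ≤ ∑ q ∈ Y ×ˢ Y, (W + if |G q.1 - G q.2 + s| ≤ 1 then D else 0) :=
        sum_le_sum fun q _ => hX _
    _ = _ := by
        rw [sum_add_distrib, sum_const, sum_ite, sum_const_zero, sum_const, card_product,
          nsmul_eq_mul, nsmul_eq_mul, add_zero]
        push_cast
        rw [sq, mul_comm D]
        rfl

section SquareDifferences

variable {δ C N : ℝ} {M : ℤ}

theorem card_filter_sq_sub_sq_eq_Icc_le (hδ : 0 ≤ δ) (hC : 0 ≤ C) (hN : 0 ≤ N)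
    (hdiv : ∀ n : ℕ, n ≠ 0 → (#n.divisors : ℝ) ≤ C * (n : ℝ) ^ δ) (hMN : (M : ℝ) ≤ N) (v : ℤ) :
    (#{p ∈ Icc (-M) M ×ˢ Icc (-M) M | p.1 ^ 2 - p.2 ^ 2 = v} : ℝ)
      ≤ 2 * C * N ^ (2 * δ) + if v = 0 then 2 * (#(Icc (-M) M) : ℝ) else 0 := by
  have hW : 0 ≤ 2 * C * N ^ (2 * δ) := by positivity
  split_ifs with hv
  · subst hv
    simp only [sub_eq_zero]
    have h0 : (#{p ∈ Icc (-M) M ×ˢ Icc (-M) M | p.1 ^ 2 = p.2 ^ 2} : ℝ) ≤ 2 * #(Icc (-M) M) := by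
      exact_mod_cast card_filter_sq_eq_sq_le _
    linarith
  rw [add_zero]
  rcases Finset.eq_empty_or_nonempty {p ∈ Icc (-M) M ×ˢ Icc (-M) M | p.1 ^ 2 - p.2 ^ 2 = v}
    with hempty | ⟨p, hp⟩
  · simpa [hempty] using hW
  -- a nonempty fibre forces `|v| ≤ M ^ 2 ≤ N ^ 2`
  have hvM : |(v : ℝ)| ≤ N ^ 2 := by
    obtain ⟨hpbox, rfl⟩ := mem_filter.1 hp
    have hsq : ∀ a ∈ Icc (-M) M, (a : ℝ) ^ 2 ≤ N ^ 2 := fun a ha => by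
      obtain ⟨h1, h2⟩ := mem_Icc.1 ha
      have : (M : ℝ) ^ 2 ≤ N ^ 2 := by nlinarith [(by exact_mod_cast h1.trans h2 : (-M : ℝ) ≤ M)]
      exact (sq_le_sq' (by exact_mod_cast h1) (by exact_mod_cast h2)).trans this
    push_cast
    exact abs_sub_le_of_nonneg_of_le (sq_nonneg _) (hsq _ (mem_product.1 hpbox).1) (sq_nonneg _)
      (hsq _ (mem_product.1 hpbox).2)
  calc (#{p ∈ Icc (-M) M ×ˢ Icc (-M) M | p.1 ^ 2 - p.2 ^ 2 = v} : ℝ)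
      ≤ 2 * #v.natAbs.divisors := by exact_mod_cast card_filter_sq_sub_sq_eq_le _ hv
    _ ≤ 2 * (C * (v.natAbs : ℝ) ^ δ) := by gcongr; exact hdiv _ (Int.natAbs_ne_zero.2 hv)
    _ ≤ 2 * (C * (N ^ 2) ^ δ) := by
        gcongr
        rwa [Nat.cast_natAbs, Int.cast_abs]
    _ = 2 * C * N ^ (2 * δ) := by
        rw [← Real.rpow_natCast, ← Real.rpow_mul hN]; push_cast; ring

theorem card_nearPairs_sq_Icc_le {θmin θ₀ : ℝ} (hθmin : 0 < θmin)
    (hθ₀ : θmin ≤ θ₀) (hδ : 0 ≤ δ) (hC : 0 ≤ C) (hN : 0 ≤ N)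
    (hdiv : ∀ n : ℕ, n ≠ 0 → (#n.divisors : ℝ) ≤ C * (n : ℝ) ^ δ) (hMN : (M : ℝ) ≤ N) (c : ℝ) :
    (#(nearPairs (Icc (-M) M) (fun a : ℤ => θ₀ * (a : ℝ) ^ 2) c) : ℝ)
      ≤ (2 / θmin + 1) * (2 * C * N ^ (2 * δ))
        + if |c| ≤ 1 then 2 * (#(Icc (-M) M) : ℝ) else 0 := by
  set B := Icc (-M) M
  have hθ₀pos : 0 < θ₀ := hθmin.trans_le hθ₀
  set V := Icc ⌈(-1 - c) / θ₀⌉ ⌊(1 - c) / θ₀⌋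
  have hV : ∀ v : ℤ, v ∈ V ↔ |θ₀ * v + c| ≤ 1 := fun v => by
    rw [mem_Icc, Int.ceil_le, Int.le_floor, div_le_iff₀ hθ₀pos, le_div_iff₀ hθ₀pos, abs_le]
    constructor <;> rintro ⟨h1, h2⟩ <;> constructor <;> linarith
  have hVcard : (#V : ℝ) ≤ 2 / θmin + 1 := by
    refine (card_Icc_ceil_floor_le (by gcongr; linarith)).trans ?_
    rw [← sub_div, show 1 - c - (-1 - c) = 2 by ring]
    gcongr
  have hcover : nearPairs B (fun a : ℤ => θ₀ * (a : ℝ) ^ 2) c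
      ⊆ V.biUnion fun v => {p ∈ B ×ˢ B | p.1 ^ 2 - p.2 ^ 2 = v} := fun p hp => by
    obtain ⟨hpB, hpc⟩ := mem_filter.1 hp
    refine mem_biUnion.2 ⟨p.1 ^ 2 - p.2 ^ 2, (hV _).2 ?_, mem_filter.2 ⟨hpB, rfl⟩⟩
    convert hpc using 2
    push_cast
    ring
  calc (#(nearPairs B (fun a : ℤ => θ₀ * (a : ℝ) ^ 2) c) : ℝ)
      ≤ ∑ v ∈ V, (#{p ∈ B ×ˢ B | p.1 ^ 2 - p.2 ^ 2 = v} : ℝ) := by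
        exact_mod_cast (card_le_card hcover).trans card_biUnion_le
    _ ≤ ∑ v ∈ V, (2 * C * N ^ (2 * δ) + if v = 0 then 2 * (#B : ℝ) else 0) :=
        sum_le_sum fun v _ => card_filter_sq_sub_sq_eq_Icc_le hδ hC hN hdiv hMN v
    _ = #V * (2 * C * N ^ (2 * δ)) + if |c| ≤ 1 then 2 * (#B : ℝ) else 0 := by
        rw [sum_add_distrib, sum_const, nsmul_eq_mul, sum_ite_eq']
        simp only [hV 0, Int.cast_zero, mul_zero, zero_add]
    _ ≤ _ := by gcongr

end SquareDifferences

noncomputable def intCube (k : ℕ) (M : ℤ) : Finset (Fin k → ℤ) :=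
  Fintype.piFinset fun _ => Icc (-M) M

noncomputable def quadForm {k : ℕ} (θ : Fin k → ℝ) (m : Fin k → ℤ) : ℝ :=
  ∑ j, θ j * (m j : ℝ) ^ 2

theorem intCube_succ (k : ℕ) (M : ℤ) :
    intCube (k + 1) M = (Icc (-M) M ×ˢ intCube k M).map (Fin.consEquiv fun _ => ℤ).toEmbedding := by
  have h := filter_piFinset_eq_map_consEquiv (fun _ : Fin (k + 1) => Icc (-M) M) fun _ => True
  simp only [filter_true] at h
  exact h

theorem quadForm_comp_consEquiv {k : ℕ} (θ : Fin (k + 1) → ℝ) :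
    quadForm θ ∘ (Fin.consEquiv fun _ => ℤ).toEmbedding
      = fun p => θ 0 * (p.1 : ℝ) ^ 2 + quadForm (Fin.tail θ) p.2 := by
  ext p
  simp [quadForm, Fin.sum_univ_succ, Fin.tail]

theorem card_intCube (k : ℕ) (M : ℤ) : #(intCube k M) = #(Icc (-M) M) ^ k := by
  rw [intCube, Fintype.card_piFinset, prod_const, card_univ, Fintype.card_fin]

section Energy

variable {θmin W N : ℝ} {M : ℤ}

theorem card_nearPairs_intCube_succ_le
    (h1 : ∀ θ₀, θmin ≤ θ₀ → ∀ c, (#(nearPairs (Icc (-M) M) (fun a : ℤ => θ₀ * (a : ℝ) ^ 2) c) : ℝ)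
      ≤ W + if |c| ≤ 1 then 2 * (#(Icc (-M) M) : ℝ) else 0)
    {k : ℕ} (θ : Fin (k + 1) → ℝ) (hθ : θmin ≤ θ 0) (s : ℝ) :
    (#(nearPairs (intCube (k + 1) M) (quadForm θ) s) : ℝ)
      ≤ ((#(Icc (-M) M) : ℝ) ^ k) ^ 2 * W
        + 2 * #(Icc (-M) M) * #(nearPairs (intCube k M) (quadForm (Fin.tail θ)) s) := by
  rw [intCube_succ, card_nearPairs_map, quadForm_comp_consEquiv]
  have := card_nearPairs_prod_le _ (intCube k M) _ (quadForm (Fin.tail θ)) (h1 _ hθ) s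
  rwa [card_intCube, Nat.cast_pow] at this

theorem card_nearPairs_intCube_le (hN : 1 ≤ N) (hMN : (M : ℝ) ≤ N)
    (h1 : ∀ θ₀, θmin ≤ θ₀ → ∀ c, (#(nearPairs (Icc (-M) M) (fun a : ℤ => θ₀ * (a : ℝ) ^ 2) c) : ℝ)
      ≤ W + if |c| ≤ 1 then 2 * (#(Icc (-M) M) : ℝ) else 0)
    (k : ℕ) (θ : Fin (k + 1) → ℝ) (hθ : ∀ j, θmin ≤ θ j) (s : ℝ) :
    (#(nearPairs (intCube (k + 1) M) (quadForm θ) s) : ℝ)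
      ≤ (k + 1) * W * (9 * N ^ 2) ^ k + (6 * N) ^ (k + 1) := by
  have hW : 0 ≤ W := by simpa using (Nat.cast_nonneg _).trans (h1 θmin le_rfl 2)
  have hB : (#(Icc (-M) M) : ℝ) ≤ 3 * N := card_Icc_neg_le hMN hN
  have hB2 : 2 * (#(Icc (-M) M) : ℝ) ≤ 6 * N := by linarith
  induction k generalizing s with
  | zero =>
    have hE0 : (#(nearPairs (intCube 0 M) (quadForm (Fin.tail θ)) s) : ℝ) ≤ 1 := by
      exact_mod_cast (card_filter_le _ _).trans (by simp [card_intCube])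
    calc _ ≤ ((#(Icc (-M) M) : ℝ) ^ 0) ^ 2 * W
          + 2 * #(Icc (-M) M) * #(nearPairs (intCube 0 M) (quadForm (Fin.tail θ)) s) :=
          card_nearPairs_intCube_succ_le h1 θ (hθ 0) s
      _ ≤ 1 * W + 6 * N * 1 := by rw [pow_zero, one_pow]; gcongr
      _ = _ := by ring
  | succ k ih =>
    have hE := ih (Fin.tail θ) (fun j => hθ _) s
    have hcube : ((#(Icc (-M) M) : ℝ) ^ (k + 1)) ^ 2 ≤ (9 * N ^ 2) ^ (k + 1) := by
      rw [← pow_mul, mul_comm, pow_mul]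
      gcongr
      nlinarith
    have h6N : 6 * N ≤ 9 * N ^ 2 := by nlinarith
    calc _ ≤ ((#(Icc (-M) M) : ℝ) ^ (k + 1)) ^ 2 * W
          + 2 * #(Icc (-M) M) * #(nearPairs (intCube (k + 1) M) (quadForm (Fin.tail θ)) s) :=
          card_nearPairs_intCube_succ_le h1 θ (hθ 0) s
      _ ≤ (9 * N ^ 2) ^ (k + 1) * W
          + 6 * N * ((k + 1) * W * (9 * N ^ 2) ^ k + (6 * N) ^ (k + 1)) := by gcongr
      _ ≤ (9 * N ^ 2) ^ (k + 1) * W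
          + (9 * N ^ 2) * ((k + 1) * W * (9 * N ^ 2) ^ k) + 6 * N * (6 * N) ^ (k + 1) := by
          rw [mul_add, ← add_assoc]; gcongr
      _ = _ := by push_cast; ring

end Energy

theorem exists_card_nearPairs_intCube_le {k : ℕ} (hk : 2 ≤ k) {ε θmin : ℝ} (hε : 0 < ε)
    (hθmin : 0 < θmin) :
    ∃ A : ℝ, 0 < A ∧ ∀ θ : Fin k → ℝ, (∀ j, θmin ≤ θ j) → ∀ N : ℝ, 1 ≤ N →
      (#(nearPairs (intCube k ⌊N⌋) (quadForm θ) 0) : ℝ) ≤ A * N ^ (2 * (k : ℝ) - 2 + ε) := by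
  obtain ⟨C, hC, hdiv⟩ := exists_card_divisors_le_mul_rpow (half_pos hε)
  obtain ⟨k, rfl⟩ : ∃ k', k = k' + 1 := ⟨k - 1, by omega⟩
  set W₀ := (2 / θmin + 1) * (2 * C)
  have hW₀ : 0 ≤ W₀ := mul_nonneg (by positivity) (by linarith)
  refine ⟨(k + 1) * W₀ * 9 ^ k + 6 ^ (k + 1), by positivity, fun θ hθ N hN => ?_⟩
  have hN0 : 0 < N := by linarith
  have hMN : ((⌊N⌋ : ℤ) : ℝ) ≤ N := Int.floor_le N
  have hcount := card_nearPairs_intCube_le hN hMN (fun θ₀ hθ₀ c =>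
    card_nearPairs_sq_Icc_le hθmin hθ₀ (half_pos hε).le hC hN0.le hdiv hMN c) k θ hθ 0
  have hexp : 2 * ((k + 1 : ℕ) : ℝ) - 2 + ε = 2 * k + ε := by push_cast; ring
  have hmain : N ^ ε * N ^ (2 * k) = N ^ (2 * (k : ℝ) + ε) := by
    rw [← Real.rpow_natCast, ← Real.rpow_add hN0]; push_cast; ring_nf
  have hdiag : N ^ (k + 1) ≤ N ^ (2 * (k : ℝ) + ε) := by
    rw [← Real.rpow_natCast]
    apply Real.rpow_le_rpow_of_exponent_le hN
    have : (1 : ℝ) ≤ k := by exact_mod_cast (by omega : 1 ≤ k)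
    push_cast; linarith
  rw [hexp]
  calc _ ≤ (k + 1) * ((2 / θmin + 1) * (2 * C * N ^ (2 * (ε / 2)))) * (9 * N ^ 2) ^ k
        + (6 * N) ^ (k + 1) := hcount
    _ = (k + 1) * W₀ * 9 ^ k * (N ^ ε * N ^ (2 * k)) + 6 ^ (k + 1) * N ^ (k + 1) := by
        rw [mul_div_cancel₀ ε two_ne_zero, mul_pow, mul_pow, ← pow_mul]; ring
    _ ≤ (k + 1) * W₀ * 9 ^ k * N ^ (2 * (k : ℝ) + ε) + 6 ^ (k + 1) * N ^ (2 * (k : ℝ) + ε) := by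
        rw [hmain]; gcongr
    _ = _ := by ring

section CauchySchwarz

variable {α β κ : Type*}

theorem sum_sq_card_filter_eq_le [DecidableEq κ] (X : Finset α) (f : α → κ) (K : Finset κ) :
    ∑ j ∈ K, #{x ∈ X | f x = j} ^ 2 ≤ #{p ∈ X ×ˢ X | f p.1 = f p.2} := by
  classical
  calc ∑ j ∈ K, #{x ∈ X | f x = j} ^ 2
      = #(K.biUnion fun j => {x ∈ X | f x = j} ×ˢ {x ∈ X | f x = j}) := by
        rw [card_biUnion fun j _ j' _ hjj' => disjoint_left.2 fun p hp hp' => hjj' ?_]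
        · simp_rw [card_product, sq]
        · rw [← (mem_filter.1 (mem_product.1 hp).1).2, (mem_filter.1 (mem_product.1 hp').1).2]
    _ ≤ #{p ∈ X ×ˢ X | f p.1 = f p.2} := card_le_card fun p hp => by
        obtain ⟨j, -, hp⟩ := mem_biUnion.1 hp
        simp only [mem_product, mem_filter] at hp ⊢
        exact ⟨⟨hp.1.1, hp.2.1⟩, hp.1.2.trans hp.2.2.symm⟩

theorem card_filter_add_eq_sq_le [AddCommGroup κ] [DecidableEq κ] (X : Finset α) (Y : Finset β)
    (f : α → κ) (g : β → κ) (c : κ) :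
    #{p ∈ X ×ˢ Y | f p.1 + g p.2 = c} ^ 2
      ≤ #{p ∈ X ×ˢ X | f p.1 = f p.2} * #{p ∈ Y ×ˢ Y | g p.1 = g p.2} := by
  have hfibre : #{p ∈ X ×ˢ Y | f p.1 + g p.2 = c}
      = ∑ j ∈ X.image f, #{x ∈ X | f x = j} * #{y ∈ Y | g y = c - j} := by
    rw [card_eq_sum_card_fiberwise (f := fun p => f p.1) (t := X.image f) fun p hp =>
      mem_image_of_mem f (mem_product.1 (mem_filter.1 hp).1).1]
    refine sum_congr rfl fun j _ => ?_
    rw [← card_product]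
    congr 1
    ext ⟨x, y⟩
    simp only [mem_filter, mem_product]
    constructor
    · rintro ⟨⟨⟨hx, hy⟩, hc⟩, rfl⟩
      exact ⟨⟨hx, rfl⟩, hy, eq_sub_of_add_eq' hc⟩
    · rintro ⟨⟨hx, rfl⟩, hy, hc⟩
      exact ⟨⟨⟨hx, hy⟩, by rw [hc, add_sub_cancel]⟩, rfl⟩
  have hreindex : ∑ j ∈ X.image f, #{y ∈ Y | g y = c - j} ^ 2
      = ∑ i ∈ (X.image f).image (c - ·), #{y ∈ Y | g y = i} ^ 2 :=
    (sum_image (f := fun i => #{y ∈ Y | g y = i} ^ 2) fun _ _ _ _ h => sub_right_injective h).symm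
  rw [hfibre]
  calc _ ≤ (∑ j ∈ X.image f, #{x ∈ X | f x = j} ^ 2)
        * ∑ j ∈ X.image f, #{y ∈ Y | g y = c - j} ^ 2 := sum_mul_sq_le_sq_mul_sq _ _ _
    _ ≤ _ := by
        rw [hreindex]
        exact Nat.mul_le_mul (sum_sq_card_filter_eq_le X f _) (sum_sq_card_filter_eq_le Y g _)

theorem card_filter_floor_eq_le (X : Finset α) (F : α → ℝ) :
    #{p ∈ X ×ˢ X | ⌊F p.1⌋ = ⌊F p.2⌋} ≤ #(nearPairs X F 0) :=
  card_le_card <| monotone_filter_right _ fun _ _ hp => by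
    simpa using (Int.abs_sub_lt_one_of_floor_eq_floor hp).le

theorem card_filter_abs_add_sub_le (X : Finset α) (Y : Finset β) (F : α → ℝ) (G : β → ℝ)
    (ℓ : ℝ) :
    (#{p ∈ X ×ˢ Y | |F p.1 + G p.2 - ℓ| ≤ 1} : ℝ)
      ≤ 4 * √(#(nearPairs X F 0) * #(nearPairs Y G 0)) := by
  classical
  -- `F + G` within `1` of `ℓ` forces `⌊F⌋ + ⌊G⌋` into a window of four consecutive integers
  have hcover : {p ∈ X ×ˢ Y | |F p.1 + G p.2 - ℓ| ≤ 1}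
      ⊆ (Icc (⌊ℓ⌋ - 2) (⌊ℓ⌋ + 1)).biUnion fun c => {p ∈ X ×ˢ Y | ⌊F p.1⌋ + ⌊G p.2⌋ = c} := by
    intro p hp
    obtain ⟨hpXY, hpℓ⟩ := mem_filter.1 hp
    obtain ⟨h1, h2⟩ := abs_le.1 hpℓ
    refine mem_biUnion.2 ⟨_, mem_Icc.2 ⟨?_, ?_⟩, mem_filter.2 ⟨hpXY, rfl⟩⟩
    · have : ((⌊ℓ⌋ - 3 : ℤ) : ℝ) < ⌊F p.1⌋ + ⌊G p.2⌋ := by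
        push_cast
        linarith [Int.floor_le ℓ, Int.lt_floor_add_one (F p.1), Int.lt_floor_add_one (G p.2)]
      have : ⌊ℓ⌋ - 3 < ⌊F p.1⌋ + ⌊G p.2⌋ := by exact_mod_cast this
      omega
    · have : ((⌊F p.1⌋ + ⌊G p.2⌋ : ℤ) : ℝ) < ⌊ℓ⌋ + 2 := by
        push_cast
        linarith [Int.lt_floor_add_one ℓ, Int.floor_le (F p.1), Int.floor_le (G p.2)]
      have : ⌊F p.1⌋ + ⌊G p.2⌋ < ⌊ℓ⌋ + 2 := by exact_mod_cast this
      omega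
  have hwindow : ∀ c : ℤ, (#{p ∈ X ×ˢ Y | ⌊F p.1⌋ + ⌊G p.2⌋ = c} : ℝ)
      ≤ √(#(nearPairs X F 0) * #(nearPairs Y G 0)) := fun c => by
    refine Real.le_sqrt_of_sq_le ?_
    exact_mod_cast (card_filter_add_eq_sq_le X Y (⌊F ·⌋) (⌊G ·⌋) c).trans
      (Nat.mul_le_mul (card_filter_floor_eq_le X F) (card_filter_floor_eq_le Y G))
  calc (#{p ∈ X ×ˢ Y | |F p.1 + G p.2 - ℓ| ≤ 1} : ℝ)
      ≤ ∑ c ∈ Icc (⌊ℓ⌋ - 2) (⌊ℓ⌋ + 1), (#{p ∈ X ×ˢ Y | ⌊F p.1⌋ + ⌊G p.2⌋ = c} : ℝ) := by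
        exact_mod_cast (card_le_card hcover).trans card_biUnion_le
    _ ≤ ∑ _c ∈ Icc (⌊ℓ⌋ - 2) (⌊ℓ⌋ + 1), √(#(nearPairs X F 0) * #(nearPairs Y G 0)) :=
        sum_le_sum fun c _ => hwindow c
    _ = 4 * √(#(nearPairs X F 0) * #(nearPairs Y G 0)) := by
        rw [sum_const, Int.card_Icc, nsmul_eq_mul,
          show (⌊ℓ⌋ + 1 + 1 - (⌊ℓ⌋ - 2)).toNat = 4 by omega]
        norm_num

end CauchySchwarz

theorem abs_intCast_le_iff_mem_Icc_floor {N : ℝ} {z : ℤ} :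
    |(z : ℝ)| ≤ N ↔ z ∈ Icc (-⌊N⌋) ⌊N⌋ := by
  rw [abs_le, mem_Icc, neg_le, Int.le_floor, neg_le (a := ⌊N⌋), Int.le_floor, Int.cast_neg]

theorem setOf_abs_le_and_eq_coe_filter_intCube {k : ℕ} (N : ℝ) (P : (Fin k → ℤ) → Prop)
    [DecidablePred P] :
    {m : Fin k → ℤ | (∀ j, |(m j : ℝ)| ≤ N) ∧ P m} = ↑{m ∈ intCube k ⌊N⌋ | P m} := by
  ext m
  simp only [coe_filter, intCube, Fintype.mem_piFinset, abs_intCast_le_iff_mem_Icc_floor]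

theorem card_filter_intCube_add_le {a b : ℕ} (M : ℤ) (θ : Fin (a + b) → ℝ) (ℓ : ℝ) :
    #{m ∈ intCube (a + b) M | |quadForm θ m - ℓ| ≤ 1}
      ≤ #{p ∈ intCube a M ×ˢ intCube b M |
          |quadForm (θ ∘ Fin.castAdd b) p.1 + quadForm (θ ∘ Fin.natAdd a) p.2 - ℓ| ≤ 1} := by
  refine card_le_card_of_injOn (fun m => (m ∘ Fin.castAdd b, m ∘ Fin.natAdd a))
    (fun m hm => ?_) fun m _ m' _ h => ?_
  · obtain ⟨hm, hℓ⟩ := mem_filter.1 hm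
    simp only [intCube, Fintype.mem_piFinset] at hm
    simp only [coe_filter, intCube, mem_product, Fintype.mem_piFinset]
    refine ⟨⟨fun i => hm _, fun i => hm _⟩, ?_⟩
    simpa [quadForm, Fin.sum_univ_add] using hℓ
  · obtain ⟨h1, h2⟩ := Prod.mk.inj h
    funext i
    exact Fin.addCases (congrFun h1) (congrFun h2) i

theorem lattice_count_annulus_even_general (d : ℕ) (hd4 : 4 ≤ d) (ε : ℝ) (hε : 0 < ε)
    (θmin θmax : ℝ) (hθmin : 0 < θmin) :
    ∃ C : ℝ, 0 < C ∧
      ∀ (θ : Fin d → ℝ), (∀ j, θmin ≤ θ j ∧ θ j ≤ θmax) →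
      ∀ (N : ℝ), 1 ≤ N → ∀ (ℓ : ℝ),
      (Set.ncard {m : Fin d → ℤ |
          (∀ j, |(m j : ℝ)| ≤ N) ∧ |(∑ j, θ j * (m j : ℝ) ^ 2) - ℓ| ≤ 1} : ℝ)
        ≤ C * N ^ ((d : ℝ) - 2 + ε) := by
  obtain ⟨e, rfl⟩ : ∃ e, d = 2 + e := ⟨d - 2, by omega⟩
  obtain ⟨A, hA, hA_le⟩ := exists_card_nearPairs_intCube_le le_rfl hε hθmin
  obtain ⟨A', hA', hA'_le⟩ := exists_card_nearPairs_intCube_le (k := e) (by omega) hε hθmin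
  refine ⟨4 * √(A * A'), by positivity, fun θ hθ N hN ℓ => ?_⟩
  have hN0 : 0 < N := by linarith
  have hpow : N ^ (2 * ((2 : ℕ) : ℝ) - 2 + ε) * N ^ (2 * (e : ℝ) - 2 + ε)
      = (N ^ (((2 + e : ℕ) : ℝ) - 2 + ε)) ^ 2 := by
    rw [← Real.rpow_add hN0, ← Real.rpow_natCast, ← Real.rpow_mul hN0.le]
    push_cast
    ring_nf
  rw [setOf_abs_le_and_eq_coe_filter_intCube, Set.ncard_coe_finset]
  calc _ ≤ (#{p ∈ intCube 2 ⌊N⌋ ×ˢ intCube e ⌊N⌋ |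
          |quadForm (θ ∘ Fin.castAdd e) p.1 + quadForm (θ ∘ Fin.natAdd 2) p.2 - ℓ| ≤ 1} : ℝ) := by
        exact Nat.cast_le.2 (card_filter_intCube_add_le _ θ ℓ)
    _ ≤ 4 * √(#(nearPairs (intCube 2 ⌊N⌋) (quadForm (θ ∘ Fin.castAdd e)) 0)
          * #(nearPairs (intCube e ⌊N⌋) (quadForm (θ ∘ Fin.natAdd 2)) 0)) :=
        card_filter_abs_add_sub_le _ _ _ _ ℓ
    _ ≤ 4 * √(A * N ^ (2 * ((2 : ℕ) : ℝ) - 2 + ε) * (A' * N ^ (2 * (e : ℝ) - 2 + ε))) := by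
        gcongr
        exacts [hA_le _ (fun j => (hθ _).1) N hN, hA'_le _ (fun j => (hθ _).1) N hN]
    _ = 4 * √(A * A') * N ^ (((2 + e : ℕ) : ℝ) - 2 + ε) := by
        rw [mul_mul_mul_comm, hpow, Real.sqrt_mul (by positivity), Real.sqrt_sq (by positivity),
          mul_assoc]

/-- Lemma 3, even case: the number of lattice points `m ∈ [-N, N]^d` with `|Q(m) - ℓ| ≤ 1`,
where `Q(m) = Σ θ_j m_j²`, is at most `C N^{d - 2 + ε}` for even `d ≥ 4`. -/
theorem lattice_count_annulus_even (d : ℕ) (hd4 : 4 ≤ d) (heven : Even d) (ε : ℝ) (hε : 0 < ε)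
    (θmin θmax : ℝ) (hθmin : 0 < θmin) (hminmax : θmin ≤ θmax) :
    ∃ C : ℝ, 0 < C ∧
      ∀ (θ : Fin d → ℝ), (∀ j, θmin ≤ θ j ∧ θ j ≤ θmax) →
      ∀ (N : ℝ), 1 ≤ N → ∀ (ℓ : ℝ),
      (Set.ncard {m : Fin d → ℤ |
          (∀ j, |(m j : ℝ)| ≤ N) ∧ |(∑ j, θ j * (m j : ℝ) ^ 2) - ℓ| ≤ 1} : ℝ)
        ≤ C * N ^ ((d : ℝ) - 2 + ε) :=
  lattice_count_annulus_even_general d hd4 ε hε θmin θmax hθmin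
end

section
/- (Lemma 4 for ellipsoidal annuli.) Let d ≥ 2 be an integer and let Q(x) = θ_1 x_1² + … + θ_d x_d² for x ∈ ℝ^d, where 0 < θ_min ≤ θ_j ≤ θ_max for all j. There exists a constant c > 0, depending only on d, θ_min and θ_max, such that for every real X ≥ 1 the following holds: if A₁, …, A_{d+1} ∈ ℤ^d are affinely independent (i.e., they do not all lie in a common affine hyperplane of ℝ^d) and satisfy X ≤ Q(A_i) ≤ X + 1 for every i, then the largest pairwise Euclidean distance max_{1 ≤ i < j ≤ d+1} |A_i − A_j| is at least c · X^{1/(2(d+1))}. -/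
set_option maxHeartbeats 1000000

open Finset in
lemma det_abs_le_prod_rows {n : ℕ} (A : Matrix (Fin n) (Fin n) ℝ) (r : Fin n → ℝ)
    (h : ∀ i j, |A i j| ≤ r i) : |A.det| ≤ (Nat.factorial n : ℝ) * ∏ i, r i := by
  rw [Matrix.det_apply]
  calc |∑ σ : Equiv.Perm (Fin n), Equiv.Perm.sign σ • ∏ i, A (σ i) i|
      ≤ ∑ σ : Equiv.Perm (Fin n), |Equiv.Perm.sign σ • ∏ i, A (σ i) i| :=
        Finset.abs_sum_le_sum_abs _ _
    _ ≤ ∑ _σ : Equiv.Perm (Fin n), ∏ i, r i := by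
        refine Finset.sum_le_sum fun σ _ => ?_
        have h1 : |Equiv.Perm.sign σ • ∏ i, A (σ i) i| = |∏ i, A (σ i) i| := by
          rcases Int.units_eq_one_or (Equiv.Perm.sign σ) with hs | hs <;> simp [hs]
        rw [h1, Finset.abs_prod]
        calc ∏ i, |A (σ i) i| ≤ ∏ i, r (σ i) :=
              Finset.prod_le_prod (fun i _ => abs_nonneg _) (fun i _ => h (σ i) i)
          _ = ∏ i, r i := Equiv.prod_comp σ r
    _ = (Nat.factorial n : ℝ) * ∏ i, r i := by
        simp [Finset.sum_const, Finset.card_univ, Fintype.card_perm, mul_comm]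

/-- Lemma 4 for ellipsoidal annuli: if `d + 1` affinely independent lattice points all lie
in the annulus `X ≤ Q ≤ X + 1` of the positive definite diagonal quadratic form
`Q(x) = Σ θ_j x_j²`, then their largest pairwise Euclidean distance is at least
`c X^{1/(2(d+1))}`, for a constant `c > 0` depending only on `d`, `θmin`, `θmax`. -/
theorem large_distance_in_annulus (d : ℕ) (hd2 : 2 ≤ d)
    (θmin θmax : ℝ) (hθmin : 0 < θmin) (hminmax : θmin ≤ θmax) :
    ∃ c : ℝ, 0 < c ∧
      ∀ (θ : Fin d → ℝ), (∀ j, θmin ≤ θ j ∧ θ j ≤ θmax) →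
      ∀ (X : ℝ), 1 ≤ X →
      ∀ (A : Fin (d + 1) → (Fin d → ℤ)),
      AffineIndependent ℝ (fun i : Fin (d + 1) => (fun j => (A i j : ℝ) : Fin d → ℝ)) →
      (∀ i, X ≤ ∑ j, θ j * (A i j : ℝ) ^ 2 ∧ ∑ j, θ j * (A i j : ℝ) ^ 2 ≤ X + 1) →
      ∃ i i' : Fin (d + 1), i ≠ i' ∧
        c * X ^ ((1 : ℝ) / (2 * (d + 1))) ≤
          Real.sqrt (∑ j, ((A i j : ℝ) - (A i' j : ℝ)) ^ 2) := by
  have hθmax : (0:ℝ) < θmax := lt_of_lt_of_le hθmin hminmax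
  have hd0 : (0:ℝ) < d := by positivity
  set K : ℝ := (d : ℝ) * (Nat.factorial d : ℝ) * (1 + θmax) / 2 with hK
  have hKpos : 0 < K := by
    have h0 : (0:ℝ) < (Nat.factorial d : ℝ) := by positivity
    have h1 : (0:ℝ) < 1 + θmax := by linarith
    positivity
  set T : ℝ := Real.sqrt (θmax * d) with hT
  have hTpos : 0 < T := Real.sqrt_pos.2 (by positivity)
  refine ⟨min 1 (θmin / (T * (K + 1))), lt_min one_pos (by positivity), ?_⟩
  set c : ℝ := min 1 (θmin / (T * (K + 1))) with hc
  have hc0 : 0 < c := lt_min one_pos (by positivity)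
  have hc1 : c ≤ 1 := min_le_left _ _
  intro θ hθ X hX A hAff hAnn
  by_contra hcon
  push_neg at hcon
  set α : ℝ := (1 : ℝ) / (2 * (d + 1)) with hα
  set B : ℝ := c * X ^ α with hBdef
  have hXpos : (0:ℝ) < X := lt_of_lt_of_le one_pos hX
  have hB0 : 0 < B := by positivity
  have hθnn : ∀ j, 0 ≤ θ j := fun j => le_trans hθmin.le (hθ j).1
  -- the points are injective
  have hinj : Function.Injective A := by
    intro i i' hii
    exact hAff.injective (funext fun j => by simp [hii])
  -- all distances < B
  have hdist : ∀ i i', i ≠ i' →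
      Real.sqrt (∑ j, ((A i j : ℝ) - (A i' j : ℝ)) ^ 2) < B := fun i i' h => hcon i i' h
  -- B > 1
  have hB1 : 1 < B := by
    have hne01 : (⟨0, by omega⟩ : Fin (d+1)) ≠ (⟨1, by omega⟩ : Fin (d+1)) :=
      Fin.ne_of_val_ne (by norm_num)
    have hAne : A ⟨0, by omega⟩ ≠ A ⟨1, by omega⟩ := fun h => hne01 (hinj h)
    obtain ⟨j, hj⟩ := Function.ne_iff.1 hAne
    have hm : (1:ℝ) ≤ ((A ⟨0, by omega⟩ j : ℝ) - (A ⟨1, by omega⟩ j : ℝ))^2 := by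
      have h1 : (1:ℤ) ≤ |A ⟨0, by omega⟩ j - A ⟨1, by omega⟩ j| :=
        Int.one_le_abs (sub_ne_zero.2 hj)
      have h2 : (1:ℝ) ≤ |(A ⟨0, by omega⟩ j : ℝ) - (A ⟨1, by omega⟩ j : ℝ)| := by
        exact_mod_cast h1
      nlinarith [sq_abs ((A ⟨0, by omega⟩ j : ℝ) - (A ⟨1, by omega⟩ j : ℝ))]
    have hsum1 : (1:ℝ) ≤ ∑ j', ((A ⟨0, by omega⟩ j' : ℝ) - (A ⟨1, by omega⟩ j' : ℝ))^2 :=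
      le_trans hm (Finset.single_le_sum
        (f := fun j' => ((A ⟨0, by omega⟩ j' : ℝ) - (A ⟨1, by omega⟩ j' : ℝ))^2)
        (fun j' _ => sq_nonneg _) (Finset.mem_univ j))
    have := hdist ⟨0, by omega⟩ ⟨1, by omega⟩ hne01
    have h1le : (1:ℝ) ≤ Real.sqrt (∑ j', ((A ⟨0, by omega⟩ j' : ℝ) - (A ⟨1, by omega⟩ j' : ℝ))^2) := by
      rw [show (1:ℝ) = Real.sqrt 1 from Real.sqrt_one.symm]
      exact Real.sqrt_le_sqrt hsum1
    linarith
  -- matrix of difference vectors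
  set v : Matrix (Fin d) (Fin d) ℝ :=
    Matrix.of (fun i j => (A (Fin.succ i) j : ℝ) - (A 0 j : ℝ)) with hv
  set vZ : Matrix (Fin d) (Fin d) ℤ :=
    Matrix.of (fun i j => A (Fin.succ i) j - A 0 j) with hvZ
  have hmap : v = vZ.map (Int.castRingHom ℝ) := by
    ext i j
    simp [hv, hvZ, Matrix.map_apply]
  -- entry bounds
  have hsum : ∀ i : Fin d, ∑ j, (v i j)^2 ≤ B^2 := by
    intro i
    have h := hdist (Fin.succ i) 0 (Fin.succ_ne_zero i)
    have h2 := (Real.sqrt_lt' hB0).1 h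
    have h3 : ∑ j, ((A (Fin.succ i) j : ℝ) - (A 0 j : ℝ))^2 ≤ B^2 := le_of_lt h2
    simpa [hv] using h3
  have hentry : ∀ i j, |v i j| ≤ B := by
    intro i j
    have h1 : (v i j)^2 ≤ B^2 :=
      le_trans (Finset.single_le_sum (f := fun j' => (v i j')^2)
        (fun j' _ => sq_nonneg _) (Finset.mem_univ j)) (hsum i)
    calc |v i j| = Real.sqrt ((v i j)^2) := (Real.sqrt_sq_eq_abs _).symm
      _ ≤ Real.sqrt (B^2) := Real.sqrt_le_sqrt h1
      _ = B := Real.sqrt_sq hB0.le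
  -- linear independence and determinant
  have hli : LinearIndependent ℝ (fun i : Fin d => v i) := by
    rw [affineIndependent_iff_linearIndependent_vsub ℝ _ (0 : Fin (d+1))] at hAff
    let e : Fin d ≃ {x : Fin (d+1) // x ≠ 0} :=
      { toFun := fun i => ⟨Fin.succ i, Fin.succ_ne_zero i⟩
        invFun := fun x => Fin.pred x.1 x.2
        left_inv := fun i => by simp
        right_inv := fun x => Subtype.ext (Fin.succ_pred x.1 x.2) }
    have h2 := hAff.comp e e.injective
    have heq : (fun i : Fin d => v i)
        = fun i : Fin d => ((fun j => (A (e i).1 j : ℝ)) -ᵥ (fun j => (A 0 j : ℝ)) : Fin d → ℝ) := by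
      funext i
      funext j
      simp [hv, e, vsub_eq_sub]
    rw [heq]
    exact h2
  have hdet_ne : v.det ≠ 0 := by
    have hu : IsUnit v := Matrix.linearIndependent_rows_iff_isUnit.1 hli
    exact ((Matrix.isUnit_iff_isUnit_det v).1 hu).ne_zero
  have hcast : v.det = ((vZ.det : ℤ) : ℝ) := by
    rw [hmap]
    exact (RingHom.map_det (Int.castRingHom ℝ) vZ).symm
  have hdet1 : (1:ℝ) ≤ |v.det| := by
    have hz : vZ.det ≠ 0 := by
      intro h
      exact hdet_ne (by rw [hcast, h, Int.cast_zero])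
    rw [hcast]
    have := Int.one_le_abs hz
    exact_mod_cast this
  -- the vectors w and s
  set w : Fin d → ℝ := fun j => θ j * (A 0 j : ℝ) with hw
  set s : Fin d → ℝ := v.mulVec w with hs
  have hE : ∀ i, |s i| ≤ (1 + θmax * B^2)/2 := by
    intro i
    have hkey : 2 * s i = ((∑ j, θ j * (A (Fin.succ i) j : ℝ)^2) - ∑ j, θ j * (A 0 j : ℝ)^2)
        - ∑ j, θ j * (v i j)^2 := by
      simp only [hs, Matrix.mulVec, dotProduct, hw, hv, Matrix.of_apply, Finset.mul_sum,
        ← Finset.sum_sub_distrib]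
      refine Finset.sum_congr rfl fun j _ => ?_
      ring
    have hQv : ∑ j, θ j * (v i j)^2 ≤ θmax * B^2 := by
      calc ∑ j, θ j * (v i j)^2 ≤ ∑ j, θmax * (v i j)^2 :=
            Finset.sum_le_sum fun j _ => mul_le_mul_of_nonneg_right (hθ j).2 (sq_nonneg _)
        _ = θmax * ∑ j, (v i j)^2 := by rw [Finset.mul_sum]
        _ ≤ θmax * B^2 := mul_le_mul_of_nonneg_left (hsum i) hθmax.le
    have hQv0 : 0 ≤ ∑ j, θ j * (v i j)^2 :=
      Finset.sum_nonneg fun j _ => mul_nonneg (hθnn j) (sq_nonneg _)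
    have h1 := hAnn (Fin.succ i)
    have h2 := hAnn 0
    rw [abs_le]
    constructor <;> linarith [h1.1, h1.2, h2.1, h2.2]
  -- the big coordinate
  have hbig : ∃ j0 : Fin d, X / (θmax * d) ≤ ((A 0 j0 : ℝ))^2 := by
    have hsumb : X / θmax ≤ ∑ j, ((A 0 j : ℝ))^2 := by
      have h0 := (hAnn 0).1
      have h1 : ∑ j, θ j * (A 0 j : ℝ)^2 ≤ θmax * ∑ j, ((A 0 j : ℝ))^2 := by
        rw [Finset.mul_sum]
        exact Finset.sum_le_sum fun j _ => mul_le_mul_of_nonneg_right (hθ j).2 (sq_nonneg _)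
      rw [div_le_iff₀ hθmax]
      nlinarith
    have hconst : ∑ _j : Fin d, X / (θmax * d) ≤ ∑ j, ((A 0 j : ℝ))^2 := by
      rw [Finset.sum_const, Finset.card_univ, Fintype.card_fin, nsmul_eq_mul]
      calc (d:ℝ) * (X / (θmax * d)) = X / θmax := by
            field_simp
        _ ≤ _ := hsumb
    obtain ⟨j0, -, hj0⟩ := Finset.exists_le_of_sum_le ⟨⟨0, by omega⟩, Finset.mem_univ _⟩ hconst
    exact ⟨j0, hj0⟩
  obtain ⟨j0, hj0⟩ := hbig
  have hwj0 : θmin * Real.sqrt (X / (θmax * d)) ≤ |w j0| := by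
    have h1 : Real.sqrt (X/(θmax*d)) ≤ |(A 0 j0 : ℝ)| := by
      rw [← Real.sqrt_sq_eq_abs]
      exact Real.sqrt_le_sqrt hj0
    calc θmin * Real.sqrt (X/(θmax*d)) ≤ θ j0 * |(A 0 j0 : ℝ)| :=
          mul_le_mul (hθ j0).1 h1 (Real.sqrt_nonneg _) (hθnn j0)
      _ = |w j0| := by rw [hw, abs_mul, abs_of_nonneg (hθnn j0)]
  -- Cramer
  have hcram : v.adjugate.mulVec s = v.det • w := by
    rw [hs, Matrix.mulVec_mulVec, Matrix.adjugate_mul, Matrix.smul_mulVec,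
      Matrix.one_mulVec]
  -- adjugate bound
  have hadj : ∀ k, |v.adjugate j0 k| ≤ (Nat.factorial d : ℝ) * B^(d-1) := by
    intro k
    rw [Matrix.adjugate_apply]
    have hb : ∀ i j, |(v.updateRow k (Pi.single j0 1)) i j| ≤ (fun i => if i = k then 1 else B) i := by
      intro i j
      rw [Matrix.updateRow_apply]
      by_cases h : i = k
      · simp only [h, if_pos rfl]
        simp [Pi.single_apply]
        split_ifs <;> norm_num
      · simp only [if_neg h]
        exact hentry i j
    have hmain := det_abs_le_prod_rows _ _ hb
    have hprod : (∏ i : Fin d, (if i = k then (1:ℝ) else B)) = B^(d-1) := by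
      rw [← Finset.mul_prod_erase Finset.univ _ (Finset.mem_univ k), if_pos rfl, one_mul]
      rw [Finset.prod_congr rfl (fun i hi => if_neg (Finset.ne_of_mem_erase hi)),
        Finset.prod_const, Finset.card_erase_of_mem (Finset.mem_univ k),
        Finset.card_univ, Fintype.card_fin]
    rw [hprod] at hmain
    exact hmain
  -- main chain
  have hkey2 : θmin * Real.sqrt (X/(θmax*d))
      ≤ (d:ℝ) * ((Nat.factorial d : ℝ) * B^(d-1) * ((1 + θmax * B^2)/2)) := by
    calc θmin * Real.sqrt (X/(θmax*d)) ≤ |w j0| := hwj0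
      _ ≤ |v.det| * |w j0| := le_mul_of_one_le_left (abs_nonneg _) hdet1
      _ = |v.det * w j0| := (abs_mul _ _).symm
      _ = |(v.adjugate.mulVec s) j0| := by rw [hcram]; simp
      _ = |∑ k, v.adjugate j0 k * s k| := by simp [Matrix.mulVec, dotProduct]
      _ ≤ ∑ k, |v.adjugate j0 k * s k| := Finset.abs_sum_le_sum_abs _ _
      _ ≤ ∑ _k : Fin d, (Nat.factorial d : ℝ) * B^(d-1) * ((1 + θmax * B^2)/2) := by
          refine Finset.sum_le_sum fun k _ => ?_
          rw [abs_mul]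
          exact mul_le_mul (hadj k) (hE k) (abs_nonneg _) (by positivity)
      _ = (d:ℝ) * ((Nat.factorial d : ℝ) * B^(d-1) * ((1 + θmax * B^2)/2)) := by
          rw [Finset.sum_const, Finset.card_univ, Fintype.card_fin, nsmul_eq_mul]
  -- power computation
  have hBpow : B^(d-1) * B^2 = B^(d+1) := by
    rw [← pow_add]
    congr 1
    omega
  have hBd1 : B^(d+1) ≤ c * Real.sqrt X := by
    have h2 : (X^α)^(d+1) = Real.sqrt X := by
      rw [← Real.rpow_natCast (X^α) (d+1), ← Real.rpow_mul hXpos.le]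
      have hαval : α * ((d+1 : ℕ) : ℝ) = 1/2 := by
        rw [hα]
        push_cast
        have : (d:ℝ) + 1 ≠ 0 := by positivity
        field_simp
      rw [hαval, ← Real.sqrt_eq_rpow]
    have h3 : c^(d+1) ≤ c := by
      calc c^(d+1) ≤ c^1 := pow_le_pow_of_le_one hc0.le hc1 (by omega)
        _ = c := pow_one c
    calc B^(d+1) = c^(d+1) * (X^α)^(d+1) := by rw [hBdef, mul_pow]
      _ = c^(d+1) * Real.sqrt X := by rw [h2]
      _ ≤ c * Real.sqrt X := mul_le_mul_of_nonneg_right h3 (Real.sqrt_nonneg X)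
  -- endgame
  have hsqrtX : 1 ≤ Real.sqrt X := by
    rw [show (1:ℝ) = Real.sqrt 1 from Real.sqrt_one.symm]
    exact Real.sqrt_le_sqrt hX
  have hsplit : Real.sqrt (X/(θmax*d)) = Real.sqrt X / T := by
    rw [hT, Real.sqrt_div hXpos.le]
  have hEB : (1 + θmax*B^2)/2 ≤ (1 + θmax)*B^2/2 := by nlinarith [hB1, hθmax]
  have hchain : θmin * (Real.sqrt X / T) ≤ K * (c * Real.sqrt X) := by
    calc θmin * (Real.sqrt X / T) = θmin * Real.sqrt (X/(θmax*d)) := by rw [hsplit]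
      _ ≤ (d:ℝ) * ((Nat.factorial d : ℝ) * B^(d-1) * ((1 + θmax * B^2)/2)) := hkey2
      _ ≤ (d:ℝ) * ((Nat.factorial d : ℝ) * B^(d-1) * ((1 + θmax)*B^2/2)) := by
          refine mul_le_mul_of_nonneg_left (mul_le_mul_of_nonneg_left hEB ?_) hd0.le
          positivity
      _ = K * (B^(d-1) * B^2) := by rw [hK]; ring
      _ = K * B^(d+1) := by rw [hBpow]
      _ ≤ K * (c * Real.sqrt X) := mul_le_mul_of_nonneg_left hBd1 hKpos.le
  have hKc : K * c < θmin / T := by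
    have h2 : c ≤ θmin / (T*(K+1)) := min_le_right _ _
    have h3 : K * c ≤ K * (θmin/(T*(K+1))) := mul_le_mul_of_nonneg_left h2 hKpos.le
    have h4 : K * (θmin/(T*(K+1))) < θmin / T := by
      have he : K * (θmin/(T*(K+1))) = (K/(K+1)) * (θmin/T) := by
        field_simp
      rw [he]
      have hlt1 : K/(K+1) < 1 := by
        rw [div_lt_one (by positivity)]
        linarith
      exact mul_lt_of_lt_one_left (by positivity) hlt1
    exact lt_of_le_of_lt h3 h4
  have hfin1 : θmin / T * Real.sqrt X ≤ K * c * Real.sqrt X := by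
    calc θmin / T * Real.sqrt X = θmin * (Real.sqrt X / T) := by ring
      _ ≤ K * (c * Real.sqrt X) := hchain
      _ = K * c * Real.sqrt X := by ring
  have hfin2 : K * c * Real.sqrt X < θmin / T * Real.sqrt X :=
    mul_lt_mul_of_pos_right hKc (lt_of_lt_of_le one_pos hsqrtX)
  exact absurd hfin1 (not_le.2 hfin2)
end

section
/- (Uniform bound on collinear lattice points in an elliptic annulus.) Let d = 2 and Q(x) = θ_1 x_1² + θ_2 x_2² with 0 < θ_min ≤ θ_j ≤ θ_max. There exists a constant C, depending only on θ_min and θ_max, such that for every real X ≥ 1 and every affine line L ⊂ ℝ², the number of points m ∈ ℤ² lying on L with X ≤ Q(m) ≤ X + 1 is at most C. -/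
/-!
Along the line `t ↦ a + t • v`, the form `Q(a + t • v)` is a quadratic polynomial in `t` with
leading coefficient `Q(v) ≥ θmin ‖v‖²` (sup norm), so the parameters `t` with
`X ≤ Q(a + t • v) ≤ X + 1` lie in two intervals of length `Q(v)^(-1/2)`. Distinct lattice points
on the line differ by at least `1` in some coordinate, so their parameters are at least `‖v‖⁻¹`
apart, and each interval contains at most `⌊1 / √θmin⌋ + 1` of them.
-/

open Set

lemma Set.ncard_le_floor_of_mapsTo_Icc_of_pairwise {α : Type*} {s : Set α} {f : α → ℝ}
    {x L δ : ℝ} (hδ : 0 < δ) (hf : MapsTo f s (Icc x (x + L)))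
    (hsep : s.Pairwise fun m m' => δ ≤ |f m - f m'|) :
    s.ncard ≤ ⌊L / δ⌋₊ + 1 := by
  have hnonneg : ∀ m ∈ s, 0 ≤ (f m - x) / δ := fun m hm =>
    div_nonneg (sub_nonneg.mpr (hf hm).1) hδ.le
  have hrange : MapsTo (fun m => ⌊(f m - x) / δ⌋₊) s (Finset.range (⌊L / δ⌋₊ + 1)) := by
    intro m hm
    simp only [Finset.coe_range, mem_Iio, Nat.lt_succ_iff]
    exact Nat.floor_le_floor <| div_le_div_of_nonneg_right (by linarith [(hf hm).2]) hδ.le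
  have hinj : InjOn (fun m => ⌊(f m - x) / δ⌋₊) s := by
    intro m hm m' hm' hfloor
    by_contra hne
    have hclose : |(f m - x) / δ - (f m' - x) / δ| < 1 := by
      refine Int.abs_sub_lt_one_of_floor_eq_floor ?_
      rw [← Int.natCast_floor_eq_floor (hnonneg m hm),
        ← Int.natCast_floor_eq_floor (hnonneg m' hm')]
      exact congrArg _ hfloor
    rw [← sub_div, sub_sub_sub_cancel_right, abs_div, abs_of_pos hδ, div_lt_one hδ] at hclose
    exact (hsep hm hm' hne).not_gt hclose
  simpa using ncard_le_ncard_of_injOn _ hrange hinj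

lemma Set.ncard_le_floor_of_mapsTo_Icc_union_Icc_of_pairwise {α : Type*} {s : Set α}
    {f : α → ℝ} {x₁ x₂ L δ : ℝ} (hδ : 0 < δ)
    (hf : MapsTo f s (Icc x₁ (x₁ + L) ∪ Icc x₂ (x₂ + L)))
    (hsep : s.Pairwise fun m m' => δ ≤ |f m - f m'|) :
    s.ncard ≤ 2 * (⌊L / δ⌋₊ + 1) := by
  have hsplit : s = (s ∩ f ⁻¹' Icc x₁ (x₁ + L)) ∪ (s ∩ f ⁻¹' Icc x₂ (x₂ + L)) := by
    rw [← inter_union_distrib_left, ← preimage_union, inter_eq_left.mpr hf.subset_preimage]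
  have hpart : ∀ x, (s ∩ f ⁻¹' Icc x (x + L)).ncard ≤ ⌊L / δ⌋₊ + 1 := fun x =>
    ncard_le_floor_of_mapsTo_Icc_of_pairwise hδ (fun _ hm => hm.2)
      (hsep.mono inter_subset_left)
  rw [hsplit]
  linarith [ncard_union_le (s ∩ f ⁻¹' Icc x₁ (x₁ + L)) (s ∩ f ⁻¹' Icc x₂ (x₂ + L)),
    hpart x₁, hpart x₂]

lemma Real.sqrt_add_le_add_sqrt (x : ℝ) {y : ℝ} (hy : 0 ≤ y) : √(x + y) ≤ √x + √y := by
  rw [Real.sqrt_le_left (by positivity), add_sq, Real.sq_sqrt hy, Real.sq_sqrt']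
  nlinarith [le_max_left x 0, Real.sqrt_nonneg x, Real.sqrt_nonneg y]

lemma exists_preimage_sq_Icc_subset_Icc_union_Icc (u : ℝ) {h : ℝ} (hh : 0 ≤ h) :
    ∃ x₁ x₂ : ℝ, (fun s : ℝ => s ^ 2) ⁻¹' Icc u (u + h) ⊆
      Icc x₁ (x₁ + √h) ∪ Icc x₂ (x₂ + √h) := by
  refine ⟨-√(u + h), √u, fun s ⟨hlo, hhi⟩ => ?_⟩
  have hsub := Real.sqrt_add_le_add_sqrt u hh
  have habs_lo : √u ≤ |s| := by rw [← Real.sqrt_sq_eq_abs]; exact Real.sqrt_le_sqrt hlo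
  have habs_hi : |s| ≤ √(u + h) := by rw [← Real.sqrt_sq_eq_abs]; exact Real.sqrt_le_sqrt hhi
  rcases abs_cases s with ⟨hs, -⟩ | ⟨hs, -⟩
  · exact Or.inr ⟨by linarith, by linarith⟩
  · exact Or.inl ⟨by linarith, by linarith⟩

lemma exists_preimage_quadratic_Icc_subset_Icc_union_Icc {A : ℝ} (hA : 0 < A) (B C X : ℝ) :
    ∃ x₁ x₂ : ℝ, (fun t => A * t ^ 2 + B * t + C) ⁻¹' Icc X (X + 1) ⊆
      Icc x₁ (x₁ + (√A)⁻¹) ∪ Icc x₂ (x₂ + (√A)⁻¹) := by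
  set t₀ := B / (2 * A)
  have hcomplete : ∀ t, A * t ^ 2 + B * t + C = A * ((t + t₀) ^ 2 - t₀ ^ 2) + C := by
    intro t
    simp only [t₀]
    field_simp
    ring
  obtain ⟨x₁, x₂, hcover⟩ :=
    exists_preimage_sq_Icc_subset_Icc_union_Icc ((X - C) / A + t₀ ^ 2) (inv_nonneg.mpr hA.le)
  refine ⟨x₁ - t₀, x₂ - t₀, fun t ⟨hlo, hhi⟩ => ?_⟩
  simp only [hcomplete] at hlo hhi
  have hmem : (t + t₀) ^ 2 ∈ Icc ((X - C) / A + t₀ ^ 2) ((X - C) / A + t₀ ^ 2 + A⁻¹) := by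
    have hdiv : (X - C) / A + A⁻¹ = (X + 1 - C) / A := by field_simp; ring
    constructor
    · have : (X - C) / A ≤ (t + t₀) ^ 2 - t₀ ^ 2 := by rw [div_le_iff₀ hA]; linarith
      linarith
    · have : (t + t₀) ^ 2 - t₀ ^ 2 ≤ (X + 1 - C) / A := by rw [le_div_iff₀ hA]; linarith
      linarith
  rw [Real.sqrt_inv] at hcover
  rcases hcover hmem with ⟨h₁, h₂⟩ | ⟨h₁, h₂⟩
  · exact Or.inl ⟨by linarith, by linarith⟩
  · exact Or.inr ⟨by linarith, by linarith⟩

lemma exists_leftInverse_add_smul {ι : Type*} (a : ι → ℝ) {v : ι → ℝ} (hv : v ≠ 0) :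
    ∃ f : (ι → ℝ) → ℝ, ∀ t, f (a + t • v) = t := by
  obtain ⟨j, hj⟩ := Function.ne_iff.mp hv
  exact ⟨fun x => (x j - a j) / v j, fun t => by simp [mul_div_cancel_right₀ _ hj]⟩

section DiagonalForm

variable {ι : Type*} [Fintype ι]

def diagQuad (θ x : ι → ℝ) : ℝ := ∑ j, θ j * x j ^ 2

lemma diagQuad_add_smul (θ a v : ι → ℝ) (t : ℝ) :
    diagQuad θ (a + t • v) =
      diagQuad θ v * t ^ 2 + (2 * ∑ j, θ j * a j * v j) * t + diagQuad θ a := by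
  simp only [diagQuad, Pi.add_apply, Pi.smul_apply, smul_eq_mul, Finset.sum_mul,
    Finset.mul_sum, ← Finset.sum_add_distrib]
  exact Finset.sum_congr rfl fun j _ => by ring

lemma mul_norm_sq_le_diagQuad {θmin : ℝ} (hθmin : 0 < θmin) {θ : ι → ℝ}
    (hθ : ∀ j, θmin ≤ θ j) (v : ι → ℝ) : θmin * ‖v‖ ^ 2 ≤ diagQuad θ v := by
  have hterm_nonneg : ∀ i, 0 ≤ θ i * v i ^ 2 := fun i =>
    mul_nonneg (hθmin.le.trans (hθ i)) (sq_nonneg (v i))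
  have hterm : ∀ j, θmin * v j ^ 2 ≤ diagQuad θ v := fun j =>
    calc θmin * v j ^ 2 ≤ θ j * v j ^ 2 := by gcongr; exact hθ j
      _ ≤ diagQuad θ v := Finset.single_le_sum (fun i _ => hterm_nonneg i) (Finset.mem_univ j)
  have hnorm : ‖v‖ ≤ √(diagQuad θ v / θmin) :=
    (pi_norm_le_iff_of_nonneg (Real.sqrt_nonneg _)).mpr fun j =>
      Real.abs_le_sqrt (by rw [le_div_iff₀ hθmin]; linarith [hterm j])
  have hQ : 0 ≤ diagQuad θ v / θmin :=
    div_nonneg (Finset.sum_nonneg fun i _ => hterm_nonneg i) hθmin.le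
  rw [← le_div_iff₀' hθmin]
  exact (Real.le_sqrt (norm_nonneg v) hQ).mp hnorm

lemma one_le_norm_intCast_sub_of_ne {m m' : ι → ℤ} (h : m ≠ m') :
    1 ≤ ‖(fun j => (m j : ℝ)) - fun j => (m' j : ℝ)‖ := by
  obtain ⟨j, hj⟩ := Function.ne_iff.mp h
  calc (1 : ℝ) ≤ |(m j : ℝ) - m' j| := by exact_mod_cast Int.one_le_abs (sub_ne_zero.mpr hj)
    _ ≤ _ := norm_le_pi_norm ((fun j => (m j : ℝ)) - fun j => (m' j : ℝ)) j

theorem ncard_lattice_points_on_line_in_annulus_le {θmin : ℝ} (hθmin : 0 < θmin)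
    {θ : ι → ℝ} (hθ : ∀ j, θmin ≤ θ j) (X : ℝ) {a v : ι → ℝ} (hv : v ≠ 0) :
    {m : ι → ℤ | (∃ t : ℝ, (fun j => (m j : ℝ)) = a + t • v) ∧
        X ≤ diagQuad θ (fun j => (m j : ℝ)) ∧ diagQuad θ (fun j => (m j : ℝ)) ≤ X + 1}.ncard ≤
      2 * (⌊1 / √θmin⌋₊ + 1) := by
  set S := {m : ι → ℤ | (∃ t : ℝ, (fun j => (m j : ℝ)) = a + t • v) ∧
    X ≤ diagQuad θ (fun j => (m j : ℝ)) ∧ diagQuad θ (fun j => (m j : ℝ)) ≤ X + 1}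
  obtain ⟨f, hf⟩ := exists_leftInverse_add_smul a hv
  have hline : ∀ m ∈ S, (fun j => (m j : ℝ)) = a + f (fun j => (m j : ℝ)) • v := by
    rintro m ⟨⟨t, ht⟩, -⟩
    rw [ht, hf]
  have hnorm : 0 < ‖v‖ := norm_pos_iff.mpr hv
  have hA := mul_norm_sq_le_diagQuad hθmin hθ v
  have hApos : 0 < diagQuad θ v := lt_of_lt_of_le (by positivity) hA
  obtain ⟨x₁, x₂, hcover⟩ := exists_preimage_quadratic_Icc_subset_Icc_union_Icc hApos
    (2 * ∑ j, θ j * a j * v j) (diagQuad θ a) X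
  have hmaps : MapsTo (fun m : ι → ℤ => f fun j => (m j : ℝ)) S
      (Icc x₁ (x₁ + (√(diagQuad θ v))⁻¹) ∪ Icc x₂ (x₂ + (√(diagQuad θ v))⁻¹)) := by
    intro m hm
    apply hcover
    rw [mem_preimage, ← diagQuad_add_smul, ← hline m hm]
    exact hm.2
  have hsep : S.Pairwise fun m m' =>
      ‖v‖⁻¹ ≤ |(f fun j => (m j : ℝ)) - f fun j => (m' j : ℝ)| := by
    intro m hm m' hm' hne
    have h := one_le_norm_intCast_sub_of_ne hne
    rw [hline m hm, hline m' hm', add_sub_add_left_eq_sub, ← sub_smul, norm_smul,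
      Real.norm_eq_abs] at h
    exact (inv_le_iff_one_le_mul₀ hnorm).mpr h
  have hratio : (√(diagQuad θ v))⁻¹ / ‖v‖⁻¹ ≤ 1 / √θmin := by
    rw [inv_div_inv, div_le_div_iff₀ (Real.sqrt_pos.mpr hApos) (Real.sqrt_pos.mpr hθmin),
      one_mul, ← Real.sqrt_sq hnorm.le, ← Real.sqrt_mul (sq_nonneg _)]
    exact Real.sqrt_le_sqrt (by linarith)
  calc S.ncard ≤ 2 * (⌊(√(diagQuad θ v))⁻¹ / ‖v‖⁻¹⌋₊ + 1) :=
        ncard_le_floor_of_mapsTo_Icc_union_Icc_of_pairwise (inv_pos.mpr hnorm) hmaps hsep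
    _ ≤ 2 * (⌊1 / √θmin⌋₊ + 1) := by gcongr

end DiagonalForm

theorem collinear_lattice_points_annulus_bounded_general (θmin θmax : ℝ) (hθmin : 0 < θmin) :
    ∃ C : ℝ, 0 < C ∧
      ∀ (θ : Fin 2 → ℝ), (∀ j, θmin ≤ θ j ∧ θ j ≤ θmax) →
      ∀ (X : ℝ), 1 ≤ X →
      ∀ (a v : Fin 2 → ℝ), v ≠ 0 →
      (Set.ncard {m : Fin 2 → ℤ |
          (∃ t : ℝ, (fun j => (m j : ℝ)) = a + t • v) ∧
          X ≤ ∑ j, θ j * (m j : ℝ) ^ 2 ∧ ∑ j, θ j * (m j : ℝ) ^ 2 ≤ X + 1} : ℝ) ≤ C := by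
  refine ⟨2 * (⌊1 / √θmin⌋₊ + 1), by positivity, fun θ hθ X _ a v hv => ?_⟩
  refine (Nat.cast_le.mpr
    (ncard_lattice_points_on_line_in_annulus_le hθmin (fun j => (hθ j).1) X hv)).trans_eq ?_
  push_cast
  rfl

/-- Uniform bound on collinear lattice points in an elliptic annulus: for
`Q(x) = θ₁ x₁² + θ₂ x₂²` positive definite, the number of lattice points lying on any
affine line and in the annulus `X ≤ Q ≤ X + 1` is bounded by a constant depending only
on `θmin`, `θmax` (uniformly in `X ≥ 1` and in the line). -/
theorem collinear_lattice_points_annulus_bounded (θmin θmax : ℝ) (hθmin : 0 < θmin)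
    (hminmax : θmin ≤ θmax) :
    ∃ C : ℝ, 0 < C ∧
      ∀ (θ : Fin 2 → ℝ), (∀ j, θmin ≤ θ j ∧ θ j ≤ θmax) →
      ∀ (X : ℝ), 1 ≤ X →
      ∀ (a v : Fin 2 → ℝ), v ≠ 0 →
      (Set.ncard {m : Fin 2 → ℤ |
          (∃ t : ℝ, (fun j => (m j : ℝ)) = a + t • v) ∧
          X ≤ ∑ j, θ j * (m j : ℝ) ^ 2 ∧ ∑ j, θ j * (m j : ℝ) ^ 2 ≤ X + 1} : ℝ) ≤ C :=
  collinear_lattice_points_annulus_bounded_general θmin θmax hθmin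
end
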